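/- arXiv:1912.05279 — 8 statements merged into one kernel-verified Lean document; each statement's English description precedes it below -/
import Mathlib

section
/- Let q > 0, π₁ ∈ (0,1), π₂ = 1 − π₁, λᵢ ≥ 0 and μᵢ > 0 for i = 1,2, and suppose the stability condition π₁λ₁ + π₂λ₂ < π₁μ₁ + π₂μ₂ holds. Define Fᵢ(z) = λᵢz² − (λᵢ+μᵢ+q)z + μᵢ and D(z) = F₁(z)F₂(z) + qz(π₁F₂(z) + π₂F₁(z)). Then D has a zero in the open interval (0,1). -/
/-- Under the stability condition `π₁λ₁ + π₂λ₂ < π₁μ₁ + π₂μ₂`, the degree-4 polynomial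
`D(z) = F₁(z)F₂(z) + qz(π₁F₂(z) + π₂F₁(z))`, with
`Fᵢ(z) = λᵢz² − (λᵢ+μᵢ+q)z + μᵢ`, has a zero in the open interval `(0,1)`. -/
theorem stmt2 (q π1 π2 l1 l2 m1 m2 : ℝ) (hq : 0 < q) (hπ1 : π1 ∈ Set.Ioo (0 : ℝ) 1)
    (hπ2 : π2 = 1 - π1) (hl1 : 0 ≤ l1) (hl2 : 0 ≤ l2) (hm1 : 0 < m1) (hm2 : 0 < m2)
    (hstab : π1 * l1 + π2 * l2 < π1 * m1 + π2 * m2)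
    (F1 F2 D : ℝ → ℝ)
    (hF1 : F1 = fun z => l1 * z ^ 2 - (l1 + m1 + q) * z + m1)
    (hF2 : F2 = fun z => l2 * z ^ 2 - (l2 + m2 + q) * z + m2)
    (hD : D = fun z => F1 z * F2 z + q * z * (π1 * F2 z + π2 * F1 z)) :
    ∃ z ∈ Set.Ioo (0 : ℝ) 1, D z = 0 := by
  set G : ℝ → ℝ := fun z =>
    l1 * l2 * z ^ 3 + (-(l1 * l2) - l1 * m2 - l2 * m1 - q * (π1 * l1 + π2 * l2)) * z ^ 2
      + (l1 * m2 + l2 * m1 + m1 * m2 + q * (π1 * m1 + π2 * m2)) * z - m1 * m2 with hG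
  have hfac : ∀ z : ℝ, D z = (z - 1) * G z := by
    intro z
    simp only [hD, hF1, hF2, hG, hπ2]
    ring
  have hG0 : G 0 < 0 := by simp [hG]; positivity
  have hG1 : 0 < G 1 := by
    have : G 1 = q * ((π1 * m1 + π2 * m2) - (π1 * l1 + π2 * l2)) := by simp [hG]; ring
    rw [this]
    have := sub_pos.mpr hstab
    positivity
  have hcont : ContinuousOn G (Set.Icc 0 1) := by
    apply Continuous.continuousOn; simp only [hG]; continuity
  have h0 : (0 : ℝ) ∈ Set.Ioo (G 0) (G 1) := ⟨hG0, hG1⟩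
  have := intermediate_value_Ioo (by norm_num : (0:ℝ) ≤ 1) hcont h0
  obtain ⟨z, hz, hGz⟩ := this
  exact ⟨z, hz, by rw [hfac z, hGz, mul_zero]⟩
end

section
/- Let d ≥ 1, q > 0, let π₁,…,π_d be nonnegative reals summing to 1, and let λᵢ, μᵢ ≥ 0. Suppose θ : (−ε, ε) → ℝ is twice differentiable with θ(0) = 0, the denominators q − λᵢ(eˢ−1) − μᵢ(e⁻ˢ−1) + θ(s) are nonzero for all s ∈ (−ε, ε) and all i, and Σᵢ πᵢ/(q − λᵢ(eˢ−1) − μᵢ(e⁻ˢ−1) + θ(s)) = 1/q for all s ∈ (−ε, ε). Then, writing m := Σ_k π_k(λ_k − μ_k) (so that θ′(0) = m), one has θ″(0) = Σᵢ πᵢλᵢ + Σᵢ πᵢμᵢ + (2/q)·Σᵢ πᵢ((λᵢ − μᵢ) − m)². -/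
/-!
Write `gᵢ(s)` for the denominators, so that `gᵢ(0) = q`. Since `Σᵢ πᵢ / gᵢ` is constant near `0`,
its derivative `-Σᵢ πᵢ gᵢ' / gᵢ²` vanishes on the whole interval, and hence so does the derivative
of that at `0`. With `gᵢ'(0) = μᵢ - λᵢ + θ'(0)` and `gᵢ''(0) = θ''(0) - λᵢ - μᵢ`, the first
identity gives `θ'(0) = m`, and the second, `Σᵢ πᵢ (q gᵢ''(0) - 2 gᵢ'(0)²) = 0`, solved for `θ''(0)`,
is the formula.
-/

open Finset

section SumOfReciprocals

variable {ι : Type*} [Fintype ι] {c : ι → ℝ} {g g' : ι → ℝ → ℝ} {U : Set ℝ} {C : ℝ}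

theorem sum_mul_div_sq_eq_zero_of_sum_div_eq_const (hU : IsOpen U)
    (hg : ∀ i, ∀ t ∈ U, HasDerivAt (g i) (g' i t) t) (hg0 : ∀ i, ∀ t ∈ U, g i t ≠ 0)
    (hC : ∀ t ∈ U, ∑ i, c i / g i t = C) {t : ℝ} (ht : t ∈ U) :
    ∑ i, c i * g' i t / g i t ^ 2 = 0 := by
  have hsum : HasDerivAt (fun t => ∑ i, c i / g i t) (∑ i, -(c i * g' i t) / g i t ^ 2) t :=
    HasDerivAt.fun_sum fun i _ => (hasDerivAt_const t (c i)).fun_div (hg i t ht) (hg0 i t ht)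
      |>.congr_deriv (by ring)
  have hconst : HasDerivAt (fun t => ∑ i, c i / g i t) 0 t :=
    (hasDerivAt_const t C).congr_of_eventuallyEq <|
      Filter.eventually_of_mem (hU.mem_nhds ht) hC
  simpa only [neg_div, sum_neg_distrib, neg_eq_zero] using hsum.unique hconst

theorem sum_mul_sub_div_cube_eq_zero_of_sum_div_eq_const (hU : IsOpen U)
    (hg : ∀ i, ∀ t ∈ U, HasDerivAt (g i) (g' i t) t) (hg0 : ∀ i, ∀ t ∈ U, g i t ≠ 0)
    (hC : ∀ t ∈ U, ∑ i, c i / g i t = C) {s : ℝ} (hs : s ∈ U) {g'' : ι → ℝ}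
    (hg' : ∀ i, HasDerivAt (g' i) (g'' i) s) :
    ∑ i, c i * (g'' i * g i s - 2 * g' i s ^ 2) / g i s ^ 3 = 0 := by
  have hsum : HasDerivAt (fun t => ∑ i, c i * g' i t / g i t ^ 2)
      (∑ i, c i * (g'' i * g i s - 2 * g' i s ^ 2) / g i s ^ 3) s := by
    refine HasDerivAt.fun_sum fun i _ => ?_
    refine (((hg' i).const_mul (c i)).fun_div ((hg i s hs).fun_pow 2)
      (pow_ne_zero 2 (hg0 i s hs))).congr_deriv ?_
    field_simp [hg0 i s hs]
    ring
  have hzero : HasDerivAt (fun t => ∑ i, c i * g' i t / g i t ^ 2) 0 s :=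
    (hasDerivAt_const s 0).congr_of_eventuallyEq <| Filter.eventually_of_mem (hU.mem_nhds hs)
      fun t ht => sum_mul_div_sq_eq_zero_of_sum_div_eq_const hU hg hg0 hC ht
  exact hsum.unique hzero

end SumOfReciprocals

theorem Real.hasDerivAt_exp_neg (t : ℝ) :
    HasDerivAt (fun s => Real.exp (-s)) (-Real.exp (-t)) t := by
  simpa using (hasDerivAt_neg t).exp

theorem hasDerivAt_eigenvalue_denominator (q a b : ℝ) {θ : ℝ → ℝ} {θ' t : ℝ}
    (hθ : HasDerivAt θ θ' t) :
    HasDerivAt (fun s => q - a * (Real.exp s - 1) - b * (Real.exp (-s) - 1) + θ s)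
      (-a * Real.exp t + b * Real.exp (-t) + θ') t := by
  exact ((((Real.hasDerivAt_exp t).sub_const 1).const_mul a).const_sub q).fun_sub
    (((Real.hasDerivAt_exp_neg t).sub_const 1).const_mul b) |>.fun_add hθ |>.congr_deriv (by ring)

theorem hasDerivAt_eigenvalue_denominator_deriv (a b : ℝ) {θ' : ℝ → ℝ} {θ'' t : ℝ}
    (hθ : HasDerivAt θ' θ'' t) :
    HasDerivAt (fun s => -a * Real.exp s + b * Real.exp (-s) + θ' s)
      (-a * Real.exp t - b * Real.exp (-t) + θ'') t := by
  exact ((Real.hasDerivAt_exp t).const_mul (-a)).fun_add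
    ((Real.hasDerivAt_exp_neg t).const_mul b) |>.fun_add hθ |>.congr_deriv (by ring)

section WeightedMoments

variable {ι : Type*} [Fintype ι] {w a b : ι → ℝ} {q x y : ℝ}

theorem eq_mean_of_first_order_condition (hw : ∑ i, w i = 1)
    (h : ∑ i, w i * (-a i + b i + x) / q ^ 2 = 0) (hq : q ≠ 0) :
    x = ∑ i, w i * (a i - b i) := by
  rw [← sum_div, div_eq_zero_iff, or_iff_left (pow_ne_zero 2 hq)] at h
  simp only [mul_add, mul_neg, sum_add_distrib, sum_neg_distrib, ← sum_mul, hw] at h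
  simp only [mul_sub, sum_sub_distrib]
  linear_combination h

theorem eq_variance_formula_of_second_order_condition (hw : ∑ i, w i = 1)
    (h : ∑ i, w i * ((-a i - b i + y) * q - 2 * (-a i + b i + x) ^ 2) / q ^ 3 = 0)
    (hq : q ≠ 0) :
    y = ∑ i, w i * a i + ∑ i, w i * b i + (2 / q) * ∑ i, w i * ((a i - b i) - x) ^ 2 := by
  rw [← sum_div, div_eq_zero_iff, or_iff_left (pow_ne_zero 3 hq)] at h
  have hsummand : ∀ i, w i * ((-a i - b i + y) * q - 2 * (-a i + b i + x) ^ 2) =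
      q * (w i * y) - q * (w i * a i) - q * (w i * b i)
        - 2 * (w i * ((a i - b i) - x) ^ 2) :=
    fun i => by ring
  simp only [hsummand, sum_sub_distrib, ← mul_sum, ← sum_mul, hw] at h
  field_simp
  linear_combination h

end WeightedMoments

theorem stmt7_general (d : ℕ) (q : ℝ) (hq : 0 < q)
    (π lam mu : Fin d → ℝ) (hπsum : ∑ i, π i = 1)
    (ε : ℝ) (hε : 0 < ε) (θ : ℝ → ℝ)
    (hdiff : DifferentiableOn ℝ θ (Set.Ioo (-ε) ε))
    (hdiff2 : DifferentiableOn ℝ (deriv θ) (Set.Ioo (-ε) ε))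
    (hθ0 : θ 0 = 0)
    (hden : ∀ s ∈ Set.Ioo (-ε) ε, ∀ i,
      q - lam i * (Real.exp s - 1) - mu i * (Real.exp (-s) - 1) + θ s ≠ 0)
    (heq : ∀ s ∈ Set.Ioo (-ε) ε,
      ∑ i, π i / (q - lam i * (Real.exp s - 1) - mu i * (Real.exp (-s) - 1) + θ s) = 1 / q)
    (m : ℝ) (hm : m = ∑ k, π k * (lam k - mu k)) :
    deriv (deriv θ) 0 =
      ∑ i, π i * lam i + ∑ i, π i * mu i + (2 / q) * ∑ i, π i * ((lam i - mu i) - m) ^ 2 := by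
  have h0 : (0 : ℝ) ∈ Set.Ioo (-ε) ε := ⟨by linarith, hε⟩
  have hg : ∀ i, ∀ t ∈ Set.Ioo (-ε) ε, HasDerivAt
      (fun s => q - lam i * (Real.exp s - 1) - mu i * (Real.exp (-s) - 1) + θ s)
      (-lam i * Real.exp t + mu i * Real.exp (-t) + deriv θ t) t := fun i t ht =>
    hasDerivAt_eigenvalue_denominator q (lam i) (mu i)
      (hdiff.differentiableAt (isOpen_Ioo.mem_nhds ht)).hasDerivAt
  have hg' : ∀ i, HasDerivAt (fun s => -lam i * Real.exp s + mu i * Real.exp (-s) + deriv θ s)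
      (-lam i - mu i + deriv (deriv θ) 0) 0 := fun i => by
    simpa using hasDerivAt_eigenvalue_denominator_deriv (lam i) (mu i)
      (hdiff2.differentiableAt (isOpen_Ioo.mem_nhds h0)).hasDerivAt
  have first_order := sum_mul_div_sq_eq_zero_of_sum_div_eq_const isOpen_Ioo hg
    (fun i t ht => hden t ht i) heq h0
  have second_order := sum_mul_sub_div_cube_eq_zero_of_sum_div_eq_const isOpen_Ioo hg
    (fun i t ht => hden t ht i) heq h0 hg'
  simp only [Real.exp_zero, neg_zero, sub_self, mul_zero, sub_zero, add_zero, mul_one, hθ0]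
    at first_order second_order
  obtain rfl : m = deriv θ 0 :=
    hm.trans (eq_mean_of_first_order_condition hπsum first_order hq.ne').symm
  exact eq_variance_formula_of_second_order_condition hπsum second_order hq.ne'

/-- Second-order implicit differentiation of the eigenvalue equation of the resampled
M/M/1 queue: if `θ` is twice differentiable on `(-ε,ε)`, `θ(0) = 0`, and
`Σᵢ πᵢ/(q - λᵢ(eˢ-1) - μᵢ(e⁻ˢ-1) + θ(s)) = 1/q` on `(-ε,ε)` (all denominators
nonzero), then with `m = Σ_k π_k(λ_k - μ_k)` one has
`θ″(0) = Σᵢ πᵢλᵢ + Σᵢ πᵢμᵢ + (2/q)·Σᵢ πᵢ((λᵢ - μᵢ) - m)²`. -/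
theorem stmt7 (d : ℕ) (hd : 1 ≤ d) (q : ℝ) (hq : 0 < q)
    (π lam mu : Fin d → ℝ) (hπ : ∀ i, 0 ≤ π i) (hπsum : ∑ i, π i = 1)
    (hlam : ∀ i, 0 ≤ lam i) (hmu : ∀ i, 0 ≤ mu i)
    (ε : ℝ) (hε : 0 < ε) (θ : ℝ → ℝ)
    (hdiff : DifferentiableOn ℝ θ (Set.Ioo (-ε) ε))
    (hdiff2 : DifferentiableOn ℝ (deriv θ) (Set.Ioo (-ε) ε))
    (hθ0 : θ 0 = 0)
    (hden : ∀ s ∈ Set.Ioo (-ε) ε, ∀ i,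
      q - lam i * (Real.exp s - 1) - mu i * (Real.exp (-s) - 1) + θ s ≠ 0)
    (heq : ∀ s ∈ Set.Ioo (-ε) ε,
      ∑ i, π i / (q - lam i * (Real.exp s - 1) - mu i * (Real.exp (-s) - 1) + θ s) = 1 / q)
    (m : ℝ) (hm : m = ∑ k, π k * (lam k - mu k)) :
    deriv (deriv θ) 0 =
      ∑ i, π i * lam i + ∑ i, π i * mu i + (2 / q) * ∑ i, π i * ((lam i - mu i) - m) ^ 2 :=
  stmt7_general d q hq π lam mu hπsum ε hε θ hdiff hdiff2 hθ0 hden heq m hm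
end

section
/- Let Q and N be independent random variables taking values in ℕ = {0,1,2,…} with 𝔼[N] < 1, and suppose Q satisfies the distributional fixed-point equation: Q has the same distribution as max(Q−1, 0) + N. Let ν(z) = 𝔼[z^N]. Then P(Q = 0) = 1 − 𝔼[N], and for every z ∈ (0,1), 𝔼[z^Q] = ν(z) · (1−z)/(ν(z) − z) · (1 − 𝔼[N]). -/
/-!
Write `φ` and `ν` for the generating functions of `Q` and `N`. The recursion and independence give
`φ z = ν z · E[z ^ (Q - 1)⁺]`, and `z · E[z ^ (Q - 1)⁺] = φ z - (1 - z) P(Q = 0)`, hence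
`(ν z - z) φ z = ν z (1 - z) P(Q = 0)`. Dividing by `1 - z` and letting `z ↑ 1`, where `φ, ν → 1`
and `(1 - ν z) / (1 - z) = E[1 + z + ⋯ + z ^ (N - 1)] → E N` by dominated convergence, gives
`P(Q = 0) = 1 - E N`. Bernoulli's inequality `ν z ≥ 1 - (1 - z) E N > z` then lets us solve
for `φ z`.
-/

open MeasureTheory ProbabilityTheory Filter Topology Finset

section GeneratingFunction

variable {Ω : Type*} [MeasurableSpace Ω] {μ : Measure Ω} {X Y : Ω → ℕ}

lemma integrable_pow_of_nat [IsFiniteMeasure μ] (hX : Measurable X) {z : ℝ} (hz0 : 0 ≤ z)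
    (hz1 : z ≤ 1) : Integrable (fun ω => z ^ X ω) μ := by
  refine (integrable_const (1 : ℝ)).mono' (by fun_prop) (ae_of_all _ fun ω => ?_)
  rw [Real.norm_of_nonneg (pow_nonneg hz0 _)]
  exact pow_le_one₀ hz0 hz1

lemma ProbabilityTheory.IndepFun.integral_pow_add (hind : IndepFun X Y μ) (hX : Measurable X)
    (hY : Measurable Y) (z : ℝ) :
    ∫ ω, z ^ (X ω + Y ω) ∂μ = (∫ ω, z ^ X ω ∂μ) * ∫ ω, z ^ Y ω ∂μ := by
  simp_rw [pow_add]
  exact (hind.comp (measurable_from_top (f := (z ^ ·))) (measurable_from_top (f := (z ^ ·)))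
    ).integral_mul_eq_mul_integral (by fun_prop) (by fun_prop)

lemma mul_integral_pow_tsub_one [IsFiniteMeasure μ] (hX : Measurable X) {z : ℝ} (hz0 : 0 ≤ z)
    (hz1 : z ≤ 1) :
    z * ∫ ω, z ^ (X ω - 1) ∂μ = ∫ ω, z ^ X ω ∂μ - (1 - z) * (μ {ω | X ω = 0}).toReal := by
  have hzero : MeasurableSet {ω | X ω = 0} := hX (measurableSet_singleton 0)
  have hpoint : ∀ ω, z * z ^ (X ω - 1) = z ^ X ω - (1 - z) * {ω | X ω = 0}.indicator 1 ω := by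
    intro ω
    by_cases h : X ω = 0
    · simp [h]
    · simp [h, mul_pow_sub_one h]
  rw [← integral_const_mul, funext hpoint, integral_sub (integrable_pow_of_nat hX hz0 hz1) ?_,
    integral_const_mul, integral_indicator_one hzero, measureReal_def]
  exact ((integrable_const 1).indicator hzero).const_mul _

lemma lt_integral_pow [IsProbabilityMeasure μ] (hX : Measurable X)
    (hint : Integrable (fun ω => (X ω : ℝ)) μ) (hmean : ∫ ω, (X ω : ℝ) ∂μ < 1) {z : ℝ}
    (hz0 : 0 ≤ z) (hz1 : z < 1) : z < ∫ ω, z ^ X ω ∂μ := by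
  have hbernoulli : ∫ ω, (1 + (X ω : ℝ) * (z - 1)) ∂μ ≤ ∫ ω, z ^ X ω ∂μ :=
    integral_mono ((integrable_const 1).add (hint.mul_const _))
      (integrable_pow_of_nat hX hz0 hz1.le) fun ω => one_add_mul_sub_le_pow (by linarith) _
  rw [integral_add (integrable_const 1) (hint.mul_const _), integral_mul_const] at hbernoulli
  simp only [integral_const, probReal_univ, smul_eq_mul, one_mul] at hbernoulli
  nlinarith

lemma tendsto_integral_pow_nhdsLT_one [IsProbabilityMeasure μ] (hX : Measurable X) :
    Tendsto (fun z : ℝ => ∫ ω, z ^ X ω ∂μ) (𝓝[<] 1) (𝓝 1) := by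
  have hlim := tendsto_integral_filter_of_dominated_convergence (μ := μ)
    (F := fun (z : ℝ) ω => z ^ X ω) (f := fun _ => 1) (l := 𝓝[<] 1) (fun _ => 1)
    (Eventually.of_forall fun _ => by fun_prop) ?_ (integrable_const 1)
    (ae_of_all _ fun ω => ?_)
  · simpa using hlim
  · filter_upwards [Ioo_mem_nhdsLT (zero_lt_one' ℝ)] with z hz
    refine ae_of_all _ fun ω => ?_
    rw [Real.norm_of_nonneg (pow_nonneg hz.1.le _)]
    exact pow_le_one₀ hz.1.le hz.2.le
  · simpa using ((continuous_pow (M := ℝ) (X ω)).tendsto 1).mono_left nhdsWithin_le_nhds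

lemma tendsto_one_sub_integral_pow_div_nhdsLT_one [IsProbabilityMeasure μ] (hX : Measurable X)
    (hint : Integrable (fun ω => (X ω : ℝ)) μ) :
    Tendsto (fun z : ℝ => (1 - ∫ ω, z ^ X ω ∂μ) / (1 - z)) (𝓝[<] 1)
      (𝓝 (∫ ω, (X ω : ℝ) ∂μ)) := by
  have hunit : ∀ᶠ z in 𝓝[<] (1 : ℝ), z ∈ Set.Ioo 0 1 := Ioo_mem_nhdsLT (zero_lt_one' ℝ)
  have hgeom : ∀ᶠ z in 𝓝[<] (1 : ℝ),
      ∫ ω, ∑ i ∈ range (X ω), z ^ i ∂μ = (1 - ∫ ω, z ^ X ω ∂μ) / (1 - z) := by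
    filter_upwards [hunit] with z hz
    have hz1 : 1 - z ≠ 0 := sub_ne_zero.2 hz.2.ne'
    rw [eq_div_iff hz1, ← integral_mul_const]
    calc ∫ ω, (∑ i ∈ range (X ω), z ^ i) * (1 - z) ∂μ = ∫ ω, (1 - z ^ X ω) ∂μ :=
          integral_congr_ae (ae_of_all _ fun ω => geom_sum_mul_neg z (X ω))
      _ = 1 - ∫ ω, z ^ X ω ∂μ := by
          rw [integral_sub (integrable_const 1) (integrable_pow_of_nat hX hz.1.le hz.2.le)]
          simp
  refine Tendsto.congr' hgeom (tendsto_integral_filter_of_dominated_convergence _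
    (Eventually.of_forall fun _ => by fun_prop) ?_ hint (ae_of_all _ fun ω => ?_))
  · filter_upwards [hunit] with z hz
    refine ae_of_all _ fun ω => ?_
    rw [Real.norm_of_nonneg (sum_nonneg fun i _ => pow_nonneg hz.1.le i)]
    calc ∑ i ∈ range (X ω), z ^ i ≤ ∑ _i ∈ range (X ω), (1 : ℝ) :=
          sum_le_sum fun i _ => pow_le_one₀ hz.1.le hz.2.le
      _ = X ω := by simp
  · have hcont : Continuous fun z : ℝ => ∑ i ∈ range (X ω), z ^ i := by fun_prop
    simpa using (hcont.tendsto 1).mono_left nhdsWithin_le_nhds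

end GeneratingFunction

section Queue

variable {Ω : Type*} [MeasurableSpace Ω] {μ : Measure Ω} {Q N : Ω → ℕ}

lemma sub_mul_integral_pow_eq_of_map_eq [IsFiniteMeasure μ] (hQ : Measurable Q)
    (hN : Measurable N) (hind : IndepFun Q N μ)
    (hfix : μ.map Q = μ.map (fun ω => max (Q ω - 1) 0 + N ω)) {z : ℝ} (hz0 : 0 ≤ z)
    (hz1 : z ≤ 1) :
    (∫ ω, z ^ N ω ∂μ - z) * ∫ ω, z ^ Q ω ∂μ
      = (∫ ω, z ^ N ω ∂μ) * (1 - z) * (μ {ω | Q ω = 0}).toReal := by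
  have hid : IdentDistrib Q (fun ω => Q ω - 1 + N ω) μ μ :=
    ⟨hQ.aemeasurable, by fun_prop, by simpa using hfix⟩
  have hstat : ∫ ω, z ^ Q ω ∂μ = (∫ ω, z ^ (Q ω - 1) ∂μ) * ∫ ω, z ^ N ω ∂μ := by
    have hind' : IndepFun (fun ω => Q ω - 1) N μ :=
      hind.comp (measurable_from_top (f := (· - 1))) measurable_id
    rw [← hind'.integral_pow_add (by fun_prop) hN]
    exact (hid.comp (measurable_from_top (f := (z ^ ·)))).integral_eq
  linear_combination
    -z * hstat - (∫ ω, z ^ N ω ∂μ) * mul_integral_pow_tsub_one (μ := μ) hQ hz0 hz1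

lemma measure_eq_zero_eq_one_sub_integral_of_map_eq [IsProbabilityMeasure μ] (hQ : Measurable Q)
    (hN : Measurable N) (hind : IndepFun Q N μ) (hint : Integrable (fun ω => (N ω : ℝ)) μ)
    (hfix : μ.map Q = μ.map (fun ω => max (Q ω - 1) 0 + N ω)) :
    (μ {ω | Q ω = 0}).toReal = 1 - ∫ ω, (N ω : ℝ) ∂μ := by
  set p₀ := (μ {ω | Q ω = 0}).toReal
  have hdiv : ∀ᶠ z in 𝓝[<] (1 : ℝ),
      (1 - (1 - ∫ ω, z ^ N ω ∂μ) / (1 - z)) * ∫ ω, z ^ Q ω ∂μ = (∫ ω, z ^ N ω ∂μ) * p₀ := by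
    filter_upwards [Ioo_mem_nhdsLT (zero_lt_one' ℝ)] with z hz
    have hz1 : 1 - z ≠ 0 := sub_ne_zero.2 hz.2.ne'
    rw [one_sub_div hz1, div_mul_eq_mul_div, div_eq_iff hz1]
    linear_combination sub_mul_integral_pow_eq_of_map_eq hQ hN hind hfix hz.1.le hz.2.le
  have hlim := ((tendsto_const_nhds.sub (tendsto_one_sub_integral_pow_div_nhdsLT_one hN hint)).mul
    (tendsto_integral_pow_nhdsLT_one hQ)).congr' hdiv
  have := tendsto_nhds_unique hlim ((tendsto_integral_pow_nhdsLT_one hN).mul_const p₀)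
  linarith

end Queue

/-- Stationary queue-length generating function: if `Q` and `N` are independent
`ℕ`-valued random variables with `E[N] < 1` and `Q =_d max(Q-1,0) + N`, then
`P(Q = 0) = 1 - E[N]` and for `z ∈ (0,1)`,
`E[z^Q] = ν(z)·(1-z)/(ν(z)-z)·(1-E[N])`, where `ν(z) = E[z^N]`. -/
theorem stmt11 {Ω : Type*} [MeasureSpace Ω] [IsProbabilityMeasure (ℙ : Measure Ω)]
    (Q N : Ω → ℕ) (hQ : Measurable Q) (hN : Measurable N)
    (hind : IndepFun Q N ℙ)
    (hint : Integrable (fun ω => (N ω : ℝ)))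
    (hmean : ∫ ω, (N ω : ℝ) < 1)
    (hfix : Measure.map Q ℙ = Measure.map (fun ω => max (Q ω - 1) 0 + N ω) ℙ) :
    (ℙ {ω | Q ω = 0}).toReal = 1 - ∫ ω, (N ω : ℝ) ∧
    ∀ z ∈ Set.Ioo (0 : ℝ) 1,
      ∫ ω, z ^ Q ω =
        (∫ ω, z ^ N ω) * (1 - z) / ((∫ ω, z ^ N ω) - z) * (1 - ∫ ω, (N ω : ℝ)) := by
  have hp₀ := measure_eq_zero_eq_one_sub_integral_of_map_eq hQ hN hind hint hfix
  refine ⟨hp₀, fun z hz => ?_⟩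
  have hν : (∫ ω, z ^ N ω) - z ≠ 0 :=
    (sub_pos.2 (lt_integral_pow hN hint hmean hz.1.le hz.2)).ne'
  rw [div_mul_eq_mul_div, eq_div_iff hν, ← hp₀]
  linear_combination sub_mul_integral_pow_eq_of_map_eq hQ hN hind hfix hz.1.le hz.2.le
end

section
/- Let (N_n)_{n≥1} be i.i.d. ℕ-valued random variables with common probability generating function ν(z) = 𝔼[z^{N₁}] and P(N₁ = 0) > 0, and let Q₀ be an ℕ-valued random variable independent of (N_n)_{n≥1}. Define recursively Q_{n+1} = max(Q_n − 1, 0) + N_{n+1}. Let κ_n(z) = 𝔼[z^{Q_n}], κ₀ = κ_0, and for r ∈ (0,1) and z ∈ (0,1) define K(r,z) = Σ_{n=0}^∞ (1−r)ⁿ r κ_n(z). Let z₀(r) be the unique root in (0,1) of z = (1−r)ν(z). Then for all r ∈ (0,1) and all z ∈ (0,1) with z ≠ z₀(r), K(r,z) = r z κ₀(z)/(z − (1−r)ν(z)) − ((1−r)(1−z)ν(z)/(z − (1−r)ν(z))) · (r κ₀(z₀(r))/(1 − z₀(r))). -/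
/-!
Since `Q n` depends only on `Q₀, N₁, …, N_n`, it is independent of `N_{n+1}`, and one service
step gives `y κ_{n+1}(y) = ν(y) (κ_n(y) + (y - 1) P(Q_n = 0))`. Summing against the weights
`(1-r)ⁿ` gives `(y - (1-r)ν(y)) A(y) = y κ₀(y) + (1-r)(y-1) ν(y) P`, where `K(r,·) = r A` and
`P = ∑ (1-r)ⁿ P(Q_n = 0)` is unknown. At `y = z₀(r)` the left side vanishes, which identifies
`P = κ₀(z₀)/(1 - z₀)`. Since `ν` is convex with `ν(1) = 1 > 1 - r`, `z₀(r)` is the only zero of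
`y - (1-r)ν(y)` in `(0,1)`, so one may divide by it at every other `z`.
-/

open MeasureTheory ProbabilityTheory Set

section GeneratingFunction

variable {Ω : Type*} [MeasurableSpace Ω] {μ : Measure Ω} {X : Ω → ℕ} {y : ℝ}

lemma integrable_pow_of_abs_le_one [IsFiniteMeasure μ] (hX : Measurable X) (hy : |y| ≤ 1) :
    Integrable (fun ω => y ^ X ω) μ :=
  (integrable_const (1 : ℝ)).mono' (measurable_from_top.comp hX).aestronglyMeasurable
    (ae_of_all _ fun ω => by simpa [abs_pow] using pow_le_one₀ (abs_nonneg y) hy)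

lemma abs_integral_pow_le_one [IsProbabilityMeasure μ] (hy : |y| ≤ 1) :
    |∫ ω, y ^ X ω ∂μ| ≤ 1 := by
  simpa using norm_integral_le_of_norm_le_const (μ := μ) (f := fun ω => y ^ X ω) (C := 1)
    (ae_of_all _ fun ω => by simpa [abs_pow] using pow_le_one₀ (abs_nonneg y) hy)

lemma mul_integral_pow_pred [IsFiniteMeasure μ] (hX : Measurable X) (hy : |y| ≤ 1) :
    y * ∫ ω, y ^ (X ω - 1) ∂μ = ∫ ω, y ^ X ω ∂μ + (y - 1) * μ.real {ω | X ω = 0} := by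
  have hzero : MeasurableSet {ω | X ω = 0} := hX (measurableSet_singleton 0)
  have hpoint : (fun ω => y * y ^ (X ω - 1))
      = fun ω => y ^ X ω + {ω | X ω = 0}.indicator (fun _ => y - 1) ω := by
    ext ω
    by_cases h : X ω = 0
    · simp [h]
    · rw [indicator_of_notMem (show ω ∉ {ω | X ω = 0} from h), add_zero, ← pow_succ',
        Nat.sub_add_cancel (Nat.pos_of_ne_zero h)]
  rw [← integral_const_mul, hpoint, integral_add (integrable_pow_of_abs_le_one hX hy)
    ((integrable_const (y - 1)).indicator hzero), integral_indicator_const (y - 1) hzero,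
    smul_eq_mul, mul_comm]

lemma convexOn_integral_pow [IsFiniteMeasure μ] (hX : Measurable X) :
    ConvexOn ℝ (Icc (0 : ℝ) 1) fun y => ∫ ω, y ^ X ω ∂μ := by
  have hint : ∀ y ∈ Icc (0 : ℝ) 1, Integrable (fun ω => y ^ X ω) μ := fun y hy =>
    integrable_pow_of_abs_le_one hX (abs_le.2 ⟨by linarith [hy.1], hy.2⟩)
  refine ⟨convex_Icc 0 1, ?_⟩
  intro x hx y hy a b ha hb hab
  have hxy : a • x + b • y ∈ Icc (0 : ℝ) 1 := convex_Icc 0 1 hx hy ha hb hab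
  simp only [smul_eq_mul] at hxy ⊢
  rw [← integral_const_mul, ← integral_const_mul, ← integral_add ((hint x hx).const_mul a)
    ((hint y hy).const_mul b)]
  exact integral_mono (hint _ hxy) (((hint x hx).const_mul a).add ((hint y hy).const_mul b))
    fun ω => by simpa using (convexOn_pow (X ω)).2 hx.1 hy.1 ha hb hab

lemma mul_integral_pow_pred_add_of_indepFun [IsFiniteMeasure μ] {Y : Ω → ℕ}
    (hX : Measurable X) (hY : Measurable Y) (hXY : IndepFun X Y μ) (hy : |y| ≤ 1) :
    y * ∫ ω, y ^ (X ω - 1 + Y ω) ∂μ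
      = (∫ ω, y ^ Y ω ∂μ) * (∫ ω, y ^ X ω ∂μ + (y - 1) * μ.real {ω | X ω = 0}) := by
  have hprod : ∫ ω, y ^ (X ω - 1 + Y ω) ∂μ = (∫ ω, y ^ (X ω - 1) ∂μ) * ∫ ω, y ^ Y ω ∂μ := by
    simp only [pow_add]
    exact hXY.integral_comp_mul_comp (f := fun k => y ^ (k - 1)) (g := fun k => y ^ k)
      hX.aemeasurable hY.aemeasurable measurable_from_top.aestronglyMeasurable
      measurable_from_top.aestronglyMeasurable
  rw [hprod, ← mul_integral_pow_pred hX hy]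
  ring

end GeneratingFunction

lemma ConvexOn.subsingleton_Ico_inter_fixedPoints {a b : ℝ} {ψ : ℝ → ℝ}
    (hψ : ConvexOn ℝ (Icc a b) ψ) (hb : ψ b < b) :
    (Ico a b ∩ Function.fixedPoints ψ).Subsingleton := by
  have hconv : ConvexOn ℝ (Icc a b) fun x => ψ x - x := hψ.sub (concaveOn_id (convex_Icc a b))
  intro v hv w hw
  wlog hvw : v < w generalizing v w with H
  · exact (not_lt.1 hvw).lt_or_eq.elim (fun h => (H hw hv h).symm) Eq.symm
  obtain ⟨⟨hav, -⟩, hψv⟩ := hv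
  obtain ⟨hw, hψw⟩ := hw
  have hseg : w ∈ openSegment ℝ v b := by
    rw [openSegment_eq_Ioo (hvw.trans hw.2)]; exact ⟨hvw, hw.2⟩
  have := hconv.lt_left_of_right_lt ⟨hav, (hvw.trans hw.2).le⟩ (right_mem_Icc.2 (hav.trans
    (hvw.trans hw.2).le)) hseg (by simp only [hψw.eq, sub_self]; linarith)
  simp only [hψv.eq, hψw.eq, sub_self, lt_self_iff_false] at this

lemma summable_geometric_mul_of_abs_le_one {q : ℝ} {a : ℕ → ℝ} (hq₀ : 0 ≤ q) (hq₁ : q < 1)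
    (ha : ∀ n, |a n| ≤ 1) : Summable fun n => q ^ n * a n :=
  (summable_geometric_of_lt_one hq₀ hq₁).of_norm_bounded fun n => by
    simpa [abs_mul, abs_pow, abs_of_nonneg hq₀] using
      mul_le_of_le_one_right (pow_nonneg hq₀ n) (ha n)

lemma tsum_geometric_mul_of_recursion {q y c ν : ℝ} {a p : ℕ → ℝ}
    (ha : Summable fun n => q ^ n * a n) (hp : Summable fun n => q ^ n * p n)
    (hrec : ∀ n, y * a (n + 1) = ν * (a n + c * p n)) :
    y * (∑' n, q ^ n * a n - a 0) = q * ν * (∑' n, q ^ n * a n + c * ∑' n, q ^ n * p n) := by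
  calc y * (∑' n, q ^ n * a n - a 0) = ∑' n, y * (q ^ (n + 1) * a (n + 1)) := by
        rw [ha.tsum_eq_zero_add, tsum_mul_left]; simp
    _ = ∑' n, q * ν * (q ^ n * a n + c * (q ^ n * p n)) := by
        congr 1; ext n; linear_combination q ^ (n + 1) * hrec n
    _ = q * ν * (∑' n, q ^ n * a n + c * ∑' n, q ^ n * p n) := by
        rw [tsum_mul_left, ha.tsum_add (hp.mul_left c), tsum_mul_left]

section StochasticRecursion

variable {Ω β : Type*} [mβ : MeasurableSpace β] {f Q : ℕ → Ω → β}
  {F : β → β → β}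

lemma measurable_iSup_comap_of_recursion (hF : Measurable (Function.uncurry F)) (h0 : Q 0 = f 0)
    (hrec : ∀ n ω, Q (n + 1) ω = F (Q n ω) (f (n + 1) ω)) (n : ℕ) :
    Measurable[⨆ i ∈ Iic n, mβ.comap (f i)] (Q n) := by
  induction n with
  | zero =>
    rw [h0]
    exact (comap_measurable (f 0)).mono (le_biSup (fun i => mβ.comap (f i)) self_mem_Iic) le_rfl
  | succ n ih =>
    have hmono : ⨆ i ∈ Iic n, mβ.comap (f i) ≤ ⨆ i ∈ Iic (n + 1), mβ.comap (f i) :=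
      biSup_mono fun i hi => Iic_subset_Iic.2 n.le_succ hi
    rw [show Q (n + 1) = fun ω => F (Q n ω) (f (n + 1) ω) from funext (hrec n)]
    exact hF.comp ((ih.mono hmono le_rfl).prodMk ((comap_measurable _).mono
      (le_biSup (fun i => mβ.comap (f i)) self_mem_Iic) le_rfl))

lemma ProbabilityTheory.iIndepFun.indepFun_of_recursion [MeasurableSpace Ω] {μ : Measure Ω}
    (hf : iIndepFun f μ) (hmeas : ∀ i, Measurable (f i)) (hF : Measurable (Function.uncurry F))
    (h0 : Q 0 = f 0)
    (hrec : ∀ n ω, Q (n + 1) ω = F (Q n ω) (f (n + 1) ω)) (n : ℕ) :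
    IndepFun (Q n) (f (n + 1)) μ := by
  have hpast_future := indep_iSup_of_disjoint (fun i => (hmeas i).comap_le) hf.iIndep
    (S := Iic n) (T := {n + 1}) (by simp)
  rw [IndepFun_iff_Indep]
  refine indep_of_indep_of_le_right (indep_of_indep_of_le_left hpast_future
    (measurable_iSup_comap_of_recursion hF h0 hrec n).comap_le) ?_
  simp

end StochasticRecursion

section LindleyRecursion

variable {Ω : Type*} [MeasurableSpace Ω] {μ : Measure Ω} {f Q : ℕ → Ω → ℕ} {y : ℝ}

lemma mul_integral_pow_lindley_succ [IsFiniteMeasure μ] (hf : iIndepFun f μ) (hmeas : ∀ i, Measurable (f i))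
    (h0 : Q 0 = f 0) (hrec : ∀ n ω, Q (n + 1) ω = Q n ω - 1 + f (n + 1) ω) (hy : |y| ≤ 1)
    (n : ℕ) :
    y * ∫ ω, y ^ Q (n + 1) ω ∂μ
      = (∫ ω, y ^ f (n + 1) ω ∂μ) * (∫ ω, y ^ Q n ω ∂μ + (y - 1) * μ.real {ω | Q n ω = 0}) := by
  have hF : Measurable (Function.uncurry fun a b : ℕ => a - 1 + b) := measurable_of_countable _
  have hQ : Measurable (Q n) := (measurable_iSup_comap_of_recursion hF h0 hrec n).mono
    (iSup₂_le fun i _ => (hmeas i).comap_le) le_rfl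
  simp only [hrec]
  exact mul_integral_pow_pred_add_of_indepFun hQ (hmeas (n + 1))
    (hf.indepFun_of_recursion hmeas hF h0 hrec n) hy

lemma mul_tsum_integral_pow_lindley [IsProbabilityMeasure μ] (hf : iIndepFun f μ) (hmeas : ∀ i, Measurable (f i))
    (hident : ∀ n, IdentDistrib (f (n + 1)) (f 1) μ μ) (h0 : Q 0 = f 0)
    (hrec : ∀ n ω, Q (n + 1) ω = Q n ω - 1 + f (n + 1) ω) {q : ℝ} (hq₀ : 0 ≤ q) (hq₁ : q < 1)
    (hy : |y| ≤ 1) :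
    y * (∑' n, q ^ n * ∫ ω, y ^ Q n ω ∂μ - ∫ ω, y ^ Q 0 ω ∂μ)
      = q * (∫ ω, y ^ f 1 ω ∂μ) * (∑' n, q ^ n * ∫ ω, y ^ Q n ω ∂μ
        + (y - 1) * ∑' n, q ^ n * μ.real {ω | Q n ω = 0}) := by
  refine tsum_geometric_mul_of_recursion
    (summable_geometric_mul_of_abs_le_one hq₀ hq₁ fun n => abs_integral_pow_le_one hy)
    (summable_geometric_mul_of_abs_le_one hq₀ hq₁ fun n => by
      rw [abs_of_nonneg measureReal_nonneg]; exact measureReal_le_one) fun n => ?_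
  rw [mul_integral_pow_lindley_succ hf hmeas h0 hrec hy n]
  congr 1
  exact ((hident n).comp measurable_from_top).integral_eq

end LindleyRecursion

theorem stmt14_general {Ω : Type*} [MeasureSpace Ω] [IsProbabilityMeasure (ℙ : Measure Ω)]
    (Q0 : Ω → ℕ) (N : ℕ → Ω → ℕ)
    (hQ0 : Measurable Q0) (hN : ∀ n, Measurable (N n))
    (hIndep : iIndepFun
      (fun n => if n = 0 then Q0 else N n) ℙ)
    (hIdent : ∀ m n, 1 ≤ m → 1 ≤ n → IdentDistrib (N m) (N n) ℙ ℙ)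
    (Q : ℕ → Ω → ℕ) (hQzero : Q 0 = Q0)
    (hQrec : ∀ n ω, Q (n + 1) ω = max (Q n ω - 1) 0 + N (n + 1) ω)
    (ν : ℝ → ℝ) (hν : ν = fun z => ∫ ω, z ^ N 1 ω)
    (κ : ℕ → ℝ → ℝ) (hκ : κ = fun n z => ∫ ω, z ^ Q n ω)
    (K : ℝ → ℝ → ℝ) (hK : K = fun r z => ∑' n : ℕ, (1 - r) ^ n * r * κ n z) :
    ∀ r ∈ Set.Ioo (0 : ℝ) 1, ∀ z0 ∈ Set.Ioo (0 : ℝ) 1, z0 = (1 - r) * ν z0 →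
      ∀ z ∈ Set.Ioo (0 : ℝ) 1, z ≠ z0 →
        K r z = r * z * κ 0 z / (z - (1 - r) * ν z) -
          ((1 - r) * (1 - z) * ν z / (z - (1 - r) * ν z)) *
            (r * κ 0 z0 / (1 - z0)) := by
  intro r hr z0 hz0 hz0eq z hz hzne
  set P := ∑' n, (1 - r) ^ n * (ℙ : Measure Ω).real {ω | Q n ω = 0}
  have hkey : ∀ y ∈ Ioo (0 : ℝ) 1, y * (∑' n, (1 - r) ^ n * κ n y - κ 0 y)
      = (1 - r) * ν y * (∑' n, (1 - r) ^ n * κ n y + (y - 1) * P) := fun y hy => by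
    simpa only [hκ, hν, one_ne_zero, ite_false] using
      mul_tsum_integral_pow_lindley hIndep (fun i => by by_cases hi : i = 0 <;> simp [hi, hQ0, hN])
        (fun n => hIdent (n + 1) 1 (by omega) le_rfl) (by simp [hQzero]) (by simp [hQrec])
        (by linarith [hr.2]) (by linarith [hr.1]) (abs_le.2 ⟨by linarith [hy.1], hy.2.le⟩)
  have hP : κ 0 z0 = (1 - z0) * P := by
    have h := hkey z0 hz0
    rw [← hz0eq] at h
    linarith [mul_left_cancel₀ hz0.1.ne' h]
  have hroot : z - (1 - r) * ν z ≠ 0 := by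
    have hconv : ConvexOn ℝ (Icc 0 1) fun y => (1 - r) * ν y := by
      simpa [hν] using (convexOn_integral_pow (μ := ℙ) (hN 1)).smul (by linarith [hr.2])
    have hν1 : (1 - r) * ν 1 < 1 := by simpa [hν] using hr.1
    intro h
    exact hzne (hconv.subsingleton_Ico_inter_fixedPoints hν1
      ⟨Ioo_subset_Ico_self hz, (sub_eq_zero.1 h).symm⟩ ⟨Ioo_subset_Ico_self hz0, hz0eq.symm⟩)
  have hKsum : K r z = r * ∑' n, (1 - r) ^ n * κ n z := by
    simp only [hK]
    rw [← tsum_mul_left]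
    exact tsum_congr fun n => by ring
  have h1z0 : 1 - z0 ≠ 0 := by linarith [hz0.2]
  rw [hKsum, hP, mul_left_comm r, mul_div_cancel_left₀ _ h1z0]
  field_simp
  linear_combination r * hkey z hz

/-- Double transform of the queue length at service completions of the M/G/1 queue
with endogenously resampled arrival rate: with `Q₀` independent of the i.i.d.
arrivals-per-service sequence `(N_n)_{n≥1}`, `Q_{n+1} = max(Q_n - 1, 0) + N_{n+1}`,
`κ_n(z) = E[z^{Q_n}]`, `ν(z) = E[z^{N₁}]`, `K(r,z) = Σ_n (1-r)ⁿ r κ_n(z)`, and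
`z₀(r)` the root in `(0,1)` of `z = (1-r)ν(z)`, one has for `r, z ∈ (0,1)`,
`z ≠ z₀(r)`:
`K(r,z) = rzκ₀(z)/(z-(1-r)ν(z)) - ((1-r)(1-z)ν(z)/(z-(1-r)ν(z)))·(rκ₀(z₀(r))/(1-z₀(r)))`. -/
theorem stmt14 {Ω : Type*} [MeasureSpace Ω] [IsProbabilityMeasure (ℙ : Measure Ω)]
    (Q0 : Ω → ℕ) (N : ℕ → Ω → ℕ)
    (hQ0 : Measurable Q0) (hN : ∀ n, Measurable (N n))
    (hIndep : iIndepFun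
      (fun n => if n = 0 then Q0 else N n) ℙ)
    (hIdent : ∀ m n, 1 ≤ m → 1 ≤ n → IdentDistrib (N m) (N n) ℙ ℙ)
    (h0 : 0 < ℙ {ω | N 1 ω = 0})
    (Q : ℕ → Ω → ℕ) (hQzero : Q 0 = Q0)
    (hQrec : ∀ n ω, Q (n + 1) ω = max (Q n ω - 1) 0 + N (n + 1) ω)
    (ν : ℝ → ℝ) (hν : ν = fun z => ∫ ω, z ^ N 1 ω)
    (κ : ℕ → ℝ → ℝ) (hκ : κ = fun n z => ∫ ω, z ^ Q n ω)
    (K : ℝ → ℝ → ℝ) (hK : K = fun r z => ∑' n : ℕ, (1 - r) ^ n * r * κ n z) :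
    ∀ r ∈ Set.Ioo (0 : ℝ) 1, ∀ z0 ∈ Set.Ioo (0 : ℝ) 1, z0 = (1 - r) * ν z0 →
      ∀ z ∈ Set.Ioo (0 : ℝ) 1, z ≠ z0 →
        K r z = r * z * κ 0 z / (z - (1 - r) * ν z) -
          ((1 - r) * (1 - z) * ν z / (z - (1 - r) * ν z)) *
            (r * κ 0 z0 / (1 - z0)) :=
  stmt14_general Q0 N hQ0 hN hIndep hIdent Q hQzero hQrec ν hν κ hκ K hK
end

section
/- Let Λ and S be independent nonnegative real random variables with 𝔼[Λ²] < ∞, 𝔼[S²] < ∞ and the normalization 𝔼[Λ]·𝔼[S] = 1. For ρ ∈ (0,1) define ν_ρ(z) = 𝔼[exp(−ρΛS(1−z))] for z ∈ (0,1), and κ_ρ(z) = ν_ρ(z)·(1−z)·(1−ρ)/(ν_ρ(z) − z). Then for every s > 0, lim_{ρ↑1} κ_ρ(e^{−(1−ρ)s}) = 1/(1 + (1/2)·𝔼[Λ²]·𝔼[S²]·s). -/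
/-!
Put `X = ΛS`, so that `E X = 1` and `E X² = E Λ² E S²` by independence, and `u = 1 - z`. With the
remainder `g t = e^{-t} - 1 + t` one has `ν_ρ(z) = 1 - ρu + E g(ρuX)` and
`ν_ρ(z) - z = u(1 - ρ) + E g(ρuX)`. Since `0 ≤ g t ≤ t²` for `t ≥ 0` and `g t / t² → 1/2`,
dominated convergence gives `E g(ρuX) / (ρu)² → E X² / 2`. Along `z = e^{-(1-ρ)s}` we have
`u/(1 - ρ) → s`, hence
`κ_ρ(z) = ν_ρ(z) / (1 + ρ² u/(1 - ρ) · E g(ρuX)/(ρu)²) → 1 / (1 + E X² s / 2)`.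
-/

open MeasureTheory ProbabilityTheory Filter Topology Asymptotics

noncomputable def expNegRemainder (t : ℝ) : ℝ := Real.exp (-t) - 1 + t

lemma continuous_expNegRemainder : Continuous expNegRemainder := by
  unfold expNegRemainder; fun_prop

lemma expNegRemainder_nonneg (t : ℝ) : 0 ≤ expNegRemainder t := by
  unfold expNegRemainder; linarith [Real.add_one_le_exp (-t)]

lemma expNegRemainder_le_sq {t : ℝ} (ht : 0 ≤ t) : expNegRemainder t ≤ t ^ 2 := by
  have hmul : Real.exp (-t) * Real.exp t = 1 := by
    rw [← Real.exp_add, neg_add_cancel, Real.exp_zero]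
  unfold expNegRemainder
  nlinarith [mul_le_mul_of_nonneg_left (Real.add_one_le_exp t) (Real.exp_pos (-t)).le,
    mul_le_mul_of_nonneg_left (Real.add_one_le_exp (-t)) ht]

lemma expNegRemainder_sub_isLittleO_sq :
    (fun t => expNegRemainder t - t ^ 2 / 2) =o[𝓝 0] (fun t => t ^ 2) := by
  have h := (Real.exp_sub_sum_range_succ_isLittleO_pow 2).comp_tendsto
    (by simpa using tendsto_neg (0 : ℝ))
  refine (h.congr_left fun t => ?_).congr_right fun t => ?_
  · simp [Finset.sum_range_succ, expNegRemainder]; ring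
  · simp

lemma tendsto_one_sub_exp_neg_div :
    Tendsto (fun t : ℝ => (1 - Real.exp (-t)) / t) (𝓝[≠] 0) (𝓝 1) := by
  have h : HasDerivAt (fun t : ℝ => 1 - Real.exp (-t)) 1 0 := by
    simpa using ((Real.hasDerivAt_exp (-0)).comp 0 (hasDerivAt_neg (0 : ℝ))).const_sub 1
  refine h.tendsto_slope.congr fun t => ?_
  simp [slope_def_field]

lemma tendsto_one_sub_exp_neg_mul_div {s : ℝ} (hs : s ≠ 0) :
    Tendsto (fun ρ => (1 - Real.exp (-(1 - ρ) * s)) / (1 - ρ)) (𝓝[<] 1) (𝓝 s) := by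
  have hmem : ∀ᶠ ρ in 𝓝[<] (1 : ℝ), ρ < 1 := self_mem_nhdsWithin
  have ht : Tendsto (fun ρ : ℝ => (1 - ρ) * s) (𝓝[<] 1) (𝓝[≠] 0) := by
    refine tendsto_nhdsWithin_iff.mpr ⟨?_, ?_⟩
    · simpa using ((by fun_prop : Continuous fun ρ : ℝ => (1 - ρ) * s).tendsto 1).mono_left
        nhdsWithin_le_nhds
    · filter_upwards [hmem] with ρ hρ
      exact mul_ne_zero (sub_pos.mpr hρ).ne' hs
  have h := (tendsto_one_sub_exp_neg_div.comp ht).const_mul s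
  rw [mul_one] at h
  refine h.congr' ?_
  filter_upwards [hmem] with ρ hρ
  have : 1 - ρ ≠ 0 := (sub_pos.mpr hρ).ne'
  simp only [Function.comp_apply, neg_mul]
  field_simp

lemma tendsto_expNegRemainder_mul_div_sq {α : Type*} {l : Filter α} {c : α → ℝ}
    (hc : Tendsto c l (𝓝 0)) (hc0 : ∀ᶠ a in l, c a ≠ 0) (x : ℝ) :
    Tendsto (fun a => expNegRemainder (c a * x) / c a ^ 2) l (𝓝 (x ^ 2 / 2)) := by
  have hcx : Tendsto (fun a => c a * x) l (𝓝 0) := by simpa using hc.mul_const x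
  have ho : (fun a => expNegRemainder (c a * x) - (c a * x) ^ 2 / 2) =o[l] (fun a => c a ^ 2) :=
    (expNegRemainder_sub_isLittleO_sq.comp_tendsto hcx).trans_isBigO
      ((isBigO_const_mul_self (x ^ 2) (fun a => c a ^ 2) l).congr_left fun a => by
        simp only [Function.comp_apply]; ring)
  have h := ho.tendsto_div_nhds_zero.add_const (x ^ 2 / 2)
  rw [zero_add] at h
  refine h.congr' ?_
  filter_upwards [hc0] with a ha
  field_simp
  ring

section Integral

variable {Ω : Type*} [MeasurableSpace Ω] {μ : Measure Ω} {X : Ω → ℝ}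

lemma integrable_expNegRemainder_mul (hX : AEStronglyMeasurable X μ) (hX0 : 0 ≤ᵐ[μ] X)
    (hX2 : Integrable (fun ω => X ω ^ 2) μ) {c : ℝ} (hc : 0 ≤ c) :
    Integrable (fun ω => expNegRemainder (c * X ω)) μ := by
  refine (hX2.const_mul (c ^ 2)).mono'
    (continuous_expNegRemainder.comp_aestronglyMeasurable (hX.const_mul c)) ?_
  filter_upwards [hX0] with ω hω
  rw [Real.norm_of_nonneg (expNegRemainder_nonneg _), ← mul_pow]
  exact expNegRemainder_le_sq (mul_nonneg hc hω)

lemma tendsto_integral_expNegRemainder_mul_div_sq {α : Type*} {l : Filter α}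
    [l.IsCountablyGenerated] {c : α → ℝ} (hc : Tendsto c l (𝓝 0)) (hc0 : ∀ᶠ a in l, 0 < c a)
    (hX : AEStronglyMeasurable X μ) (hX0 : 0 ≤ᵐ[μ] X) (hX2 : Integrable (fun ω => X ω ^ 2) μ) :
    Tendsto (fun a => (∫ ω, expNegRemainder (c a * X ω) ∂μ) / c a ^ 2) l
      (𝓝 ((∫ ω, X ω ^ 2 ∂μ) / 2)) := by
  simp_rw [← integral_div]
  refine tendsto_integral_filter_of_dominated_convergence _
    (Eventually.of_forall fun a =>
      (continuous_expNegRemainder.div_const _).comp_aestronglyMeasurable (hX.const_mul (c a)))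
    ?_ hX2
    (Eventually.of_forall fun ω => tendsto_expNegRemainder_mul_div_sq hc
      (hc0.mono fun _ h => h.ne') (X ω))
  filter_upwards [hc0] with a ha
  filter_upwards [hX0] with ω hω
  have hsq : 0 < c a ^ 2 := by positivity
  rw [Real.norm_of_nonneg (div_nonneg (expNegRemainder_nonneg _) hsq.le), div_le_iff₀ hsq,
    ← mul_pow, mul_comm (X ω)]
  exact expNegRemainder_le_sq (mul_nonneg ha.le hω)

lemma integral_exp_neg_mul [IsProbabilityMeasure μ] (hX : Integrable X μ) (hX0 : 0 ≤ᵐ[μ] X)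
    (hX2 : Integrable (fun ω => X ω ^ 2) μ) {c : ℝ} (hc : 0 ≤ c) :
    ∫ ω, Real.exp (-(c * X ω)) ∂μ = 1 - c * ∫ ω, X ω ∂μ + ∫ ω, expNegRemainder (c * X ω) ∂μ := by
  have hrem := integrable_expNegRemainder_mul hX.aestronglyMeasurable hX0 hX2 hc
  have hlin : Integrable (fun ω => 1 - c * X ω) μ := (integrable_const 1).sub (hX.const_mul c)
  calc ∫ ω, Real.exp (-(c * X ω)) ∂μ
      = ∫ ω, ((1 - c * X ω) + expNegRemainder (c * X ω)) ∂μ := by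
        congr 1; ext ω; unfold expNegRemainder; ring
    _ = 1 - c * ∫ ω, X ω ∂μ + ∫ ω, expNegRemainder (c * X ω) ∂μ := by
        rw [integral_add hlin hrem, integral_sub (integrable_const 1) (hX.const_mul c),
          integral_const_mul]
        simp

lemma tendsto_heavyTraffic_of_integral_eq_one [IsProbabilityMeasure μ] (hX : Integrable X μ)
    (hX0 : 0 ≤ᵐ[μ] X) (hmean : ∫ ω, X ω ∂μ = 1) (hX2 : Integrable (fun ω => X ω ^ 2) μ)
    {s : ℝ} (hs : 0 < s) :
    Tendsto (fun ρ => (∫ ω, Real.exp (-(ρ * X ω * (1 - Real.exp (-(1 - ρ) * s)))) ∂μ) *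
        (1 - Real.exp (-(1 - ρ) * s)) * (1 - ρ) /
        ((∫ ω, Real.exp (-(ρ * X ω * (1 - Real.exp (-(1 - ρ) * s)))) ∂μ) -
          Real.exp (-(1 - ρ) * s)))
      (𝓝[Set.Ioo 0 1] 1) (𝓝 (1 / (1 + 1 / 2 * (∫ ω, X ω ^ 2 ∂μ) * s))) := by
  set u : ℝ → ℝ := fun ρ => 1 - Real.exp (-(1 - ρ) * s) with hu_def
  set R : ℝ → ℝ := fun ρ => (∫ ω, expNegRemainder (ρ * u ρ * X ω) ∂μ) / (ρ * u ρ) ^ 2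
  have hmem : ∀ᶠ ρ in 𝓝[Set.Ioo 0 1] 1, ρ ∈ Set.Ioo (0 : ℝ) 1 := self_mem_nhdsWithin
  have hu_pos {ρ : ℝ} (hρ : ρ < 1) : 0 < u ρ := by
    have : -(1 - ρ) * s < 0 := by nlinarith
    simpa [hu_def] using Real.exp_lt_one_iff.mpr this
  have hρ : Tendsto (fun ρ : ℝ => ρ) (𝓝[Set.Ioo 0 1] 1) (𝓝 1) := nhdsWithin_le_nhds
  have hu : Tendsto u (𝓝[Set.Ioo 0 1] 1) (𝓝 0) := by
    have : Tendsto u (𝓝 1) (𝓝 (u 1)) := (by fun_prop : Continuous u).tendsto 1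
    simpa [hu_def] using this.mono_left nhdsWithin_le_nhds
  have hu_div : Tendsto (fun ρ => u ρ / (1 - ρ)) (𝓝[Set.Ioo 0 1] 1) (𝓝 s) :=
    (tendsto_one_sub_exp_neg_mul_div hs.ne').mono_left (nhdsWithin_mono _ Set.Ioo_subset_Iio_self)
  have hR : Tendsto R (𝓝[Set.Ioo 0 1] 1) (𝓝 ((∫ ω, X ω ^ 2 ∂μ) / 2)) :=
    tendsto_integral_expNegRemainder_mul_div_sq (by simpa using hρ.mul hu)
      (hmem.mono fun ρ hρ => mul_pos hρ.1 (hu_pos hρ.2)) hX.aestronglyMeasurable hX0 hX2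
  have hν {ρ : ℝ} (hρ : ρ ∈ Set.Ioo (0 : ℝ) 1) :
      ∫ ω, Real.exp (-(ρ * X ω * u ρ)) ∂μ = 1 - ρ * u ρ + (ρ * u ρ) ^ 2 * R ρ := by
    have hc : 0 < ρ * u ρ := mul_pos hρ.1 (hu_pos hρ.2)
    simp only [mul_right_comm ρ (X _), integral_exp_neg_mul hX hX0 hX2 hc.le, hmean, mul_one, R,
      mul_div_cancel₀ _ (pow_ne_zero 2 hc.ne')]
  have hlim : Tendsto (fun ρ => (1 - ρ * u ρ + (ρ * u ρ) ^ 2 * R ρ) /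
      (1 + ρ ^ 2 * R ρ * (u ρ / (1 - ρ)))) (𝓝[Set.Ioo 0 1] 1)
      (𝓝 (1 / (1 + 1 / 2 * (∫ ω, X ω ^ 2 ∂μ) * s))) := by
    have hnum := ((hρ.mul hu).const_sub 1).add (((hρ.mul hu).pow 2).mul hR)
    have hden := (((hρ.pow 2).mul hR).mul hu_div).const_add 1
    have hm : 0 ≤ ∫ ω, X ω ^ 2 ∂μ := integral_nonneg fun ω => sq_nonneg (X ω)
    rw [show 1 / (1 + 1 / 2 * (∫ ω, X ω ^ 2 ∂μ) * s) = (1 - 1 * 0 + (1 * 0) ^ 2 *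
      ((∫ ω, X ω ^ 2 ∂μ) / 2)) / (1 + 1 ^ 2 * ((∫ ω, X ω ^ 2 ∂μ) / 2) * s) by ring]
    exact hnum.div hden (by positivity)
  refine hlim.congr' ?_
  filter_upwards [hmem] with ρ hρ
  have hu0 := (hu_pos hρ.2).ne'
  have hρ1 : 1 - ρ ≠ 0 := (sub_pos.mpr hρ.2).ne'
  have hden : 1 - ρ * u ρ + (ρ * u ρ) ^ 2 * R ρ - (1 - u ρ) =
      (1 + ρ ^ 2 * R ρ * (u ρ / (1 - ρ))) * (u ρ * (1 - ρ)) := by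
    field_simp; ring
  rw [hν hρ, show Real.exp (-(1 - ρ) * s) = 1 - u ρ by simp [hu_def], sub_sub_cancel, hden,
    mul_assoc _ (u ρ), mul_div_mul_right _ _ (mul_ne_zero hu0 hρ1)]

end Integral

theorem stmt15_general {Ω : Type*} [MeasureSpace Ω] [IsProbabilityMeasure (ℙ : Measure Ω)]
    (Lam S : Ω → ℝ)
    (hLpos : ∀ ω, 0 ≤ Lam ω) (hSpos : ∀ ω, 0 ≤ S ω)
    (hLS : IndepFun Lam S ℙ)
    (hLint : Integrable Lam) (hSint : Integrable S)
    (hL2 : Integrable (fun ω => Lam ω ^ 2)) (hS2 : Integrable (fun ω => S ω ^ 2))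
    (hnorm : (∫ ω, Lam ω) * (∫ ω, S ω) = 1)
    (ν : ℝ → ℝ → ℝ)
    (hν : ν = fun ρ z => ∫ ω, Real.exp (-(ρ * Lam ω * S ω * (1 - z))))
    (κ : ℝ → ℝ → ℝ)
    (hκ : κ = fun ρ z => ν ρ z * (1 - z) * (1 - ρ) / (ν ρ z - z)) :
    ∀ s > (0 : ℝ),
      Tendsto (fun ρ => κ ρ (Real.exp (-(1 - ρ) * s)))
        (nhdsWithin 1 (Set.Ioo (0 : ℝ) 1))
        (nhds (1 / (1 + (1 / 2) * (∫ ω, Lam ω ^ 2) * (∫ ω, S ω ^ 2) * s))) := by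
  subst hκ hν
  intro s hs
  have hsq : Measurable fun x : ℝ => x ^ 2 := by fun_prop
  have hLS_sq := hLS.comp hsq hsq
  have hmean : ∫ ω, Lam ω * S ω = 1 :=
    hnorm ▸ hLS.integral_mul_eq_mul_integral hLint.1 hSint.1
  have hX2 : Integrable (fun ω => (Lam ω * S ω) ^ 2) := by
    simpa only [mul_pow, Pi.mul_def, Function.comp_def] using hLS_sq.integrable_mul hL2 hS2
  have hm2 : ∫ ω, (Lam ω * S ω) ^ 2 = (∫ ω, Lam ω ^ 2) * ∫ ω, S ω ^ 2 := by
    simpa only [mul_pow, Pi.mul_def, Function.comp_def] using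
      hLS_sq.integral_mul_eq_mul_integral hL2.1 hS2.1
  have h := tendsto_heavyTraffic_of_integral_eq_one (X := fun ω => Lam ω * S ω)
    (hLS.integrable_mul hLint hSint)
    (ae_of_all _ fun ω => mul_nonneg (hLpos ω) (hSpos ω)) hmean hX2 hs
  rw [hm2, ← mul_assoc] at h
  simpa only [mul_assoc] using h

/-- Heavy-traffic limit of the stationary queue-length transform of the M/G/1 queue
with endogenously resampled arrival rate: with `Λ, S` independent, nonnegative,
square-integrable, normalized by `E[Λ]E[S] = 1`, and
`ν_ρ(z) = E[exp(-ρΛS(1-z))]`, `κ_ρ(z) = ν_ρ(z)(1-z)(1-ρ)/(ν_ρ(z)-z)`, one has for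
every `s > 0`:
`lim_{ρ↑1} κ_ρ(e^{-(1-ρ)s}) = 1/(1 + (1/2)E[Λ²]E[S²]s)`. -/
theorem stmt15 {Ω : Type*} [MeasureSpace Ω] [IsProbabilityMeasure (ℙ : Measure Ω)]
    (Lam S : Ω → ℝ)
    (hLam : Measurable Lam) (hS : Measurable S)
    (hLpos : ∀ ω, 0 ≤ Lam ω) (hSpos : ∀ ω, 0 ≤ S ω)
    (hLS : IndepFun Lam S ℙ)
    (hLint : Integrable Lam) (hSint : Integrable S)
    (hL2 : Integrable (fun ω => Lam ω ^ 2)) (hS2 : Integrable (fun ω => S ω ^ 2))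
    (hnorm : (∫ ω, Lam ω) * (∫ ω, S ω) = 1)
    (ν : ℝ → ℝ → ℝ)
    (hν : ν = fun ρ z => ∫ ω, Real.exp (-(ρ * Lam ω * S ω * (1 - z))))
    (κ : ℝ → ℝ → ℝ)
    (hκ : κ = fun ρ z => ν ρ z * (1 - z) * (1 - ρ) / (ν ρ z - z)) :
    ∀ s > (0 : ℝ),
      Tendsto (fun ρ => κ ρ (Real.exp (-(1 - ρ) * s)))
        (nhdsWithin 1 (Set.Ioo (0 : ℝ) 1))
        (nhds (1 / (1 + (1 / 2) * (∫ ω, Lam ω ^ 2) * (∫ ω, S ω ^ 2) * s))) :=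
  stmt15_general Lam S hLpos hSpos hLS hLint hSint hL2 hS2 hnorm ν hν κ hκ
end

section
/- Let X be a nonnegative real random variable with 𝔼[X] = 1, 𝔼[X²] < ∞ and Var(X) > 0. For s > 0 define ψ(s) = 𝔼[(1 − X/s)·1_{{X ≤ s}}], and for s large enough that ψ(s) > 0 define Y_s = (1/ψ(s))·(1 − X/s)·1_{{X ≤ s}}. Then lim_{s→∞} s·Cov(X, Y_s) = −Var(X) and lim_{s→∞} s²·Var(Y_s) = Var(X). -/
/-!
Since `s · (1 - (1 - X/s) 1_{X ≤ s}) = min X s`, the variable `Y_s` is the affine image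
`(1 - min X s / s) / ψ(s)` of the truncation `min X s`, with `ψ(s) = 1 - 𝔼[min X s] / s → 1`.
Hence `s · Cov(X, Y_s) = -Cov(X, min X s) / ψ(s)` and `s² · Var(Y_s) = Var(min X s) / ψ(s)²`,
and both converge to `∓Var(X)` by dominated convergence, as `min X s = X` for large `s`
and `|min X s| ≤ |X|` for `s ≥ 0`.
-/

open MeasureTheory ProbabilityTheory Filter Topology

lemma ite_le_one_sub_div_eq_one_sub_min_div {s : ℝ} (hs : s ≠ 0) (x : ℝ) :
    (if x ≤ s then 1 - x / s else 0) = 1 - min x s / s := by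
  split_ifs with h
  · rw [min_eq_left h]
  · rw [min_eq_right (not_le.1 h).le, div_self hs, sub_self]

lemma abs_min_le_abs {x s : ℝ} (hs : 0 ≤ s) : |min x s| ≤ |x| :=
  abs_le.2 ⟨le_min (neg_abs_le x) ((neg_nonpos.2 (abs_nonneg x)).trans hs),
    (min_le_left x s).trans (le_abs_self x)⟩

namespace ProbabilityTheory

variable {Ω : Type*} {mΩ : MeasurableSpace Ω} {μ : Measure Ω} {X Z : Ω → ℝ}

lemma tendsto_integral_comp_min_atTop {G : Ω → ℝ → ℝ} {bound : Ω → ℝ}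
    (hG : ∀ s, AEStronglyMeasurable (fun ω => G ω (min (X ω) s)) μ) (hbound : Integrable bound μ)
    (hle : ∀ s, 0 ≤ s → ∀ ω, ‖G ω (min (X ω) s)‖ ≤ bound ω) :
    Tendsto (fun s => ∫ ω, G ω (min (X ω) s) ∂μ) atTop (𝓝 (∫ ω, G ω (X ω) ∂μ)) := by
  refine tendsto_integral_filter_of_dominated_convergence bound (.of_forall hG) ?_ hbound
    (.of_forall fun ω => tendsto_const_nhds.congr' ?_)
  · filter_upwards [eventually_ge_atTop 0] with s hs using .of_forall (hle s hs)
  · filter_upwards [eventually_ge_atTop (X ω)] with s hs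
    rw [min_eq_left hs]

lemma tendsto_integral_min_atTop (hX : Integrable X μ) :
    Tendsto (fun s => ∫ ω, min (X ω) s ∂μ) atTop (𝓝 (∫ ω, X ω ∂μ)) :=
  tendsto_integral_comp_min_atTop (G := fun _ y => y)
    (fun _ => hX.aestronglyMeasurable.inf aestronglyMeasurable_const) hX.abs
    fun _ hs _ => abs_min_le_abs hs

lemma tendsto_integral_mul_min_atTop (hX : MemLp X 2 μ) :
    Tendsto (fun s => ∫ ω, X ω * min (X ω) s ∂μ) atTop (𝓝 (∫ ω, X ω * X ω ∂μ)) := by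
  refine tendsto_integral_comp_min_atTop (G := fun ω y => X ω * y)
    (fun _ => hX.aestronglyMeasurable.mul
      (hX.aestronglyMeasurable.inf aestronglyMeasurable_const))
    hX.integrable_sq fun s hs ω => ?_
  rw [norm_mul, Real.norm_eq_abs, Real.norm_eq_abs, ← sq_abs (X ω), sq]
  exact mul_le_mul_of_nonneg_left (abs_min_le_abs hs) (abs_nonneg _)

lemma tendsto_integral_min_sq_atTop (hX : MemLp X 2 μ) :
    Tendsto (fun s => ∫ ω, min (X ω) s ^ 2 ∂μ) atTop (𝓝 (∫ ω, X ω ^ 2 ∂μ)) := by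
  refine tendsto_integral_comp_min_atTop (G := fun _ y => y ^ 2)
    (fun _ => (hX.aestronglyMeasurable.inf aestronglyMeasurable_const).pow 2)
    hX.integrable_sq fun s hs ω => ?_
  rw [Real.norm_eq_abs, abs_pow, ← sq_abs (X ω)]
  exact pow_le_pow_left₀ (abs_nonneg _) (abs_min_le_abs hs) 2

variable [IsProbabilityMeasure μ]

lemma integral_ite_le_one_sub_div (hX : Integrable X μ) {s : ℝ} (hs : s ≠ 0) :
    ∫ ω, (if X ω ≤ s then 1 - X ω / s else 0) ∂μ = 1 - (∫ ω, min (X ω) s ∂μ) / s := by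
  have hmin : Integrable (fun ω => min (X ω) s) μ := hX.inf (integrable_const s)
  simp only [ite_le_one_sub_div_eq_one_sub_min_div hs]
  rw [integral_sub (integrable_const 1) (hmin.div_const s), integral_const, integral_div,
    probReal_univ, one_smul]

lemma tendsto_integral_ite_le_one_sub_div_atTop (hX : Integrable X μ) :
    Tendsto (fun s => ∫ ω, (if X ω ≤ s then 1 - X ω / s else 0) ∂μ) atTop (𝓝 1) := by
  have h := ((tendsto_integral_min_atTop hX).div_atTop tendsto_id).const_sub 1
  rw [sub_zero] at h
  refine h.congr' ?_
  filter_upwards [eventually_ne_atTop 0] with s hs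
  exact (integral_ite_le_one_sub_div hX hs).symm

lemma tendsto_covariance_min_atTop (hX : MemLp X 2 μ) :
    Tendsto (fun s => cov[X, fun ω => min (X ω) s; μ]) atTop (𝓝 Var[X; μ]) := by
  rw [← covariance_self hX.aemeasurable, covariance_eq_sub hX hX]
  refine Tendsto.congr (fun s => (covariance_eq_sub hX (hX.inf (memLp_const s))).symm) ?_
  exact (tendsto_integral_mul_min_atTop hX).sub
    (tendsto_const_nhds.mul (tendsto_integral_min_atTop (hX.integrable one_le_two)))

lemma tendsto_variance_min_atTop (hX : MemLp X 2 μ) :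
    Tendsto (fun s => Var[fun ω => min (X ω) s; μ]) atTop (𝓝 Var[X; μ]) := by
  rw [variance_eq_sub hX]
  refine Tendsto.congr (fun s => (variance_eq_sub (hX.inf (memLp_const s))).symm) ?_
  exact (tendsto_integral_min_sq_atTop hX).sub
    ((tendsto_integral_min_atTop (hX.integrable one_le_two)).pow 2)

lemma mul_covariance_const_mul_one_sub_div_right (hZ : Integrable Z μ) (c : ℝ) {s : ℝ}
    (hs : s ≠ 0) : s * cov[X, fun ω => c * (1 - Z ω / s); μ] = -c * cov[X, Z; μ] := by
  rw [covariance_const_mul_right, covariance_const_sub_right (hZ.div_const s),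
    covariance_fun_div_right]
  field_simp

lemma sq_mul_variance_const_mul_one_sub_div (hZ : AEStronglyMeasurable Z μ) (c : ℝ) {s : ℝ}
    (hs : s ≠ 0) : s ^ 2 * Var[fun ω => c * (1 - Z ω / s); μ] = c ^ 2 * Var[Z; μ] := by
  simp_rw [variance_const_mul, div_eq_mul_inv, variance_const_sub (hZ.mul_const _),
    variance_mul_const]
  field_simp

end ProbabilityTheory

theorem stmt16_general {Ω : Type*} [MeasureSpace Ω] [IsProbabilityMeasure (ℙ : Measure Ω)]
    (X : Ω → ℝ) (hX : Measurable X)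
    (hX2 : Integrable (fun ω => X ω ^ 2))
    (ψ : ℝ → ℝ)
    (hψ : ψ = fun s => ∫ ω, if X ω ≤ s then 1 - X ω / s else 0)
    (Y : ℝ → Ω → ℝ)
    (hY : Y = fun s ω => (1 / ψ s) * (if X ω ≤ s then 1 - X ω / s else 0)) :
    Tendsto (fun s => s * ((∫ ω, X ω * Y s ω) - (∫ ω, X ω) * ∫ ω, Y s ω))
      atTop (nhds (-((∫ ω, X ω ^ 2) - (∫ ω, X ω) ^ 2))) ∧
    Tendsto (fun s => s ^ 2 * ((∫ ω, (Y s ω) ^ 2) - (∫ ω, Y s ω) ^ 2))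
      atTop (nhds ((∫ ω, X ω ^ 2) - (∫ ω, X ω) ^ 2)) := by
  have hXL2 : MemLp X 2 ℙ := (memLp_two_iff_integrable_sq hX.aestronglyMeasurable).2 hX2
  have hmin (s : ℝ) : MemLp (fun ω => min (X ω) s) 2 ℙ := hXL2.inf (memLp_const s)
  have hY_eq (s : ℝ) (hs : s ≠ 0) : Y s = fun ω => 1 / ψ s * (1 - min (X ω) s / s) := by
    simp only [hY, ite_le_one_sub_div_eq_one_sub_min_div hs]
  have hYL2 (s : ℝ) (hs : s ≠ 0) : MemLp (Y s) 2 ℙ := by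
    simp_rw [hY_eq s hs, div_eq_mul_inv]
    exact ((memLp_const 1).sub ((hmin s).mul_const s⁻¹)).const_mul _
  have hψ_lim : Tendsto (fun s => 1 / ψ s) atTop (𝓝 1) := by
    simpa [hψ] using
      (tendsto_integral_ite_le_one_sub_div_atTop (hXL2.integrable one_le_two)).inv₀ one_ne_zero
  have hvar : (∫ ω, X ω ^ 2) - (∫ ω, X ω) ^ 2 = Var[X; ℙ] := (variance_eq_sub hXL2).symm
  rw [hvar]
  constructor
  · have hlim := hψ_lim.neg.mul (tendsto_covariance_min_atTop hXL2)
    rw [neg_one_mul] at hlim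
    refine hlim.congr' ?_
    filter_upwards [eventually_ne_atTop 0] with s hs
    have hcov : (∫ ω, X ω * Y s ω) - (∫ ω, X ω) * ∫ ω, Y s ω = cov[X, Y s; ℙ] :=
      (covariance_eq_sub hXL2 (hYL2 s hs)).symm
    rw [hcov, hY_eq s hs,
      mul_covariance_const_mul_one_sub_div_right ((hmin s).integrable one_le_two) _ hs]
  · have hlim := (hψ_lim.pow 2).mul (tendsto_variance_min_atTop hXL2)
    rw [one_pow, one_mul] at hlim
    refine hlim.congr' ?_
    filter_upwards [eventually_ne_atTop 0] with s hs
    have hvarY : (∫ ω, Y s ω ^ 2) - (∫ ω, Y s ω) ^ 2 = Var[Y s; ℙ] :=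
      (variance_eq_sub (hYL2 s hs)).symm
    rw [hvarY, hY_eq s hs,
      sq_mul_variance_const_mul_one_sub_div (hmin s).aestronglyMeasurable _ hs]

/-- Construction of strongly negatively correlated nonnegative unit-mean random
variables: with `X ≥ 0`, `E[X] = 1`, `E[X²] < ∞`, `Var(X) > 0`,
`ψ(s) = E[(1 - X/s)1_{X≤s}]` and `Y_s = (1/ψ(s))(1 - X/s)1_{X≤s}`, one has
`lim_{s→∞} s·Cov(X,Y_s) = -Var(X)` and `lim_{s→∞} s²·Var(Y_s) = Var(X)`. -/
theorem stmt16 {Ω : Type*} [MeasureSpace Ω] [IsProbabilityMeasure (ℙ : Measure Ω)]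
    (X : Ω → ℝ) (hX : Measurable X) (hXpos : ∀ ω, 0 ≤ X ω)
    (hX2 : Integrable (fun ω => X ω ^ 2))
    (hmean : ∫ ω, X ω = 1)
    (hvar : 0 < (∫ ω, X ω ^ 2) - (∫ ω, X ω) ^ 2)
    (ψ : ℝ → ℝ)
    (hψ : ψ = fun s => ∫ ω, if X ω ≤ s then 1 - X ω / s else 0)
    (Y : ℝ → Ω → ℝ)
    (hY : Y = fun s ω => (1 / ψ s) * (if X ω ≤ s then 1 - X ω / s else 0)) :
    Tendsto (fun s => s * ((∫ ω, X ω * Y s ω) - (∫ ω, X ω) * ∫ ω, Y s ω))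
      atTop (nhds (-((∫ ω, X ω ^ 2) - (∫ ω, X ω) ^ 2))) ∧
    Tendsto (fun s => s ^ 2 * ((∫ ω, (Y s ω) ^ 2) - (∫ ω, Y s ω) ^ 2))
      atTop (nhds ((∫ ω, X ω ^ 2) - (∫ ω, X ω) ^ 2)) :=
  stmt16_general X hX hX2 ψ hψ Y hY
end

section
/- Let X be a nonnegative real random variable with 𝔼[X] = 1, 𝔼[X²] < ∞ and Var(X) > 0. For s > 0 define ψ(s) = 𝔼[(1 − X/s)·1_{{X ≤ s}}], and for s large enough that ψ(s) > 0 define Y_s = (1/ψ(s))·(1 − X/s)·1_{{X ≤ s}}. Then the correlation coefficient Corr(X, Y_s) = Cov(X, Y_s)/√(Var(X)·Var(Y_s)) is defined for all sufficiently large s, and lim_{s→∞} Corr(X, Y_s) = −1. -/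
open MeasureTheory ProbabilityTheory Filter

open MeasureTheory ProbabilityTheory Filter in
private lemma dct_aux {Ω : Type*} [MeasureSpace Ω] [IsProbabilityMeasure (ℙ : Measure Ω)]
    {F : ℝ → Ω → ℝ} {f bound : Ω → ℝ}
    (hmeas : ∀ s, AEStronglyMeasurable (F s) ℙ)
    (hbd : ∀ᶠ s in atTop, ∀ ω, ‖F s ω‖ ≤ bound ω)
    (hbi : Integrable bound)
    (hev : ∀ ω, ∀ᶠ s in atTop, F s ω = f ω) :
    Tendsto (fun s => ∫ ω, F s ω) atTop (nhds (∫ ω, f ω)) :=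
  tendsto_integral_filter_of_dominated_convergence bound (Eventually.of_forall hmeas)
    (hbd.mono fun _ h => ae_of_all _ h) hbi
    (ae_of_all _ fun ω => Tendsto.congr' ((hev ω).mono fun _ hs => hs.symm) tendsto_const_nhds)

/-- The correlation coefficient of `X` and `Y_s = (1/ψ(s))(1 - X/s)1_{X≤s}` (with
`X ≥ 0`, `E[X] = 1`, `E[X²] < ∞`, `Var(X) > 0`, `ψ(s) = E[(1 - X/s)1_{X≤s}]`) is
defined for all sufficiently large `s` and tends to `-1` as `s → ∞`. -/
theorem stmt17 {Ω : Type*} [MeasureSpace Ω] [IsProbabilityMeasure (ℙ : Measure Ω)]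
    (X : Ω → ℝ) (hX : Measurable X) (hXpos : ∀ ω, 0 ≤ X ω)
    (hX2 : Integrable (fun ω => X ω ^ 2))
    (hmean : ∫ ω, X ω = 1)
    (hvar : 0 < (∫ ω, X ω ^ 2) - (∫ ω, X ω) ^ 2)
    (ψ : ℝ → ℝ)
    (hψ : ψ = fun s => ∫ ω, if X ω ≤ s then 1 - X ω / s else 0)
    (Y : ℝ → Ω → ℝ)
    (hY : Y = fun s ω => (1 / ψ s) * (if X ω ≤ s then 1 - X ω / s else 0)) :
    (∀ᶠ s in atTop, 0 < (∫ ω, (Y s ω) ^ 2) - (∫ ω, Y s ω) ^ 2) ∧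
    Tendsto (fun s =>
        ((∫ ω, X ω * Y s ω) - (∫ ω, X ω) * ∫ ω, Y s ω) /
          Real.sqrt (((∫ ω, X ω ^ 2) - (∫ ω, X ω) ^ 2) *
            ((∫ ω, (Y s ω) ^ 2) - (∫ ω, Y s ω) ^ 2)))
      atTop (nhds (-1)) := by
  have hm2 : Integrable (fun ω => X ω ^ 2) := hX2
  set m2 : ℝ := ∫ ω, X ω ^ 2 with hm2def
  set V : ℝ := m2 - 1 with hVdef
  have hV : 0 < V := by rw [hVdef]; rw [hmean] at hvar; simpa using hvar
  -- integrability facts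
  have hint1 : Integrable (fun ω => 1 + X ω ^ 2) := (integrable_const 1).add hX2
  have hX1 : Integrable X := by
    refine hint1.mono' hX.aestronglyMeasurable (ae_of_all _ fun ω => ?_)
    have h0 := hXpos ω
    rw [Real.norm_eq_abs, abs_of_nonneg h0]; nlinarith
  have hmle : ∀ s : ℝ, MeasurableSet {ω | X ω ≤ s} :=
    fun s => measurableSet_le hX measurable_const
  have measif : ∀ (s : ℝ) (g : Ω → ℝ), Measurable g →
      AEStronglyMeasurable (fun ω => if X ω ≤ s then g ω else 0) ℙ :=
    fun s g hg => (Measurable.ite (hmle s) hg measurable_const).aestronglyMeasurable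
  have measif' : ∀ (s : ℝ) (c : ℝ) (g : Ω → ℝ), Measurable g →
      AEStronglyMeasurable (fun ω => if X ω ≤ s then (0:ℝ) else g ω) ℙ :=
    fun s c g hg => (Measurable.ite (hmle s) measurable_const hg).aestronglyMeasurable
  have iP : ∀ s : ℝ, Integrable (fun ω => if X ω ≤ s then (1:ℝ) else 0) := by
    intro s
    refine (integrable_const (1:ℝ)).mono' (measif s _ measurable_const)
      (ae_of_all _ fun ω => ?_)
    split_ifs <;> simp
  have iA : ∀ s : ℝ, Integrable (fun ω => if X ω ≤ s then X ω else 0) := by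
    intro s
    refine hX1.mono' (measif s _ hX) (ae_of_all _ fun ω => ?_)
    have h0 := hXpos ω
    split_ifs <;> simp [Real.norm_eq_abs, abs_of_nonneg h0, h0]
  have iB : ∀ s : ℝ, Integrable (fun ω => if X ω ≤ s then X ω ^ 2 else 0) := by
    intro s
    refine hX2.mono' (measif s _ (hX.pow_const 2)) (ae_of_all _ fun ω => ?_)
    split_ifs <;> simp [Real.norm_eq_abs, abs_of_nonneg (sq_nonneg (X ω)), sq_nonneg (X ω)]
  -- named truncated moments
  set P : ℝ → ℝ := fun s => ∫ ω, if X ω ≤ s then (1:ℝ) else 0 with hPdef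
  set A : ℝ → ℝ := fun s => ∫ ω, if X ω ≤ s then X ω else 0 with hAdef
  set B : ℝ → ℝ := fun s => ∫ ω, if X ω ≤ s then X ω ^ 2 else 0 with hBdef
  set C : ℝ → ℝ := fun s => ∫ ω, if X ω ≤ s then (0:ℝ) else s * (X ω - 1) with hCdef
  set D : ℝ → ℝ := fun s => ∫ ω, if X ω ≤ s then (0:ℝ) else s ^ 2 with hDdef
  set E : ℝ → ℝ := fun s => ∫ ω, if X ω ≤ s then (0:ℝ) else s with hEdef
  -- algebraic identities
  have hψeq : ∀ s : ℝ, ψ s = P s - A s / s := by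
    intro s
    have h1 : (fun ω => if X ω ≤ s then 1 - X ω / s else 0)
        = fun ω => (if X ω ≤ s then (1:ℝ) else 0) - (if X ω ≤ s then X ω else 0) / s := by
      funext ω; split_ifs <;> simp
    simp only [hψ, h1]
    rw [integral_sub (iP s) ((iA s).div_const s), integral_div]
  have hXfeq : ∀ s : ℝ,
      (∫ ω, X ω * (if X ω ≤ s then 1 - X ω / s else 0)) = A s - B s / s := by
    intro s
    have h1 : (fun ω => X ω * (if X ω ≤ s then 1 - X ω / s else 0))
        = fun ω => (if X ω ≤ s then X ω else 0) - (if X ω ≤ s then X ω ^ 2 else 0) / s := by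
      funext ω; split_ifs <;> [ring; simp]
    rw [h1, integral_sub (iA s) ((iB s).div_const s), integral_div]
  have hf2eq : ∀ s : ℝ,
      (∫ ω, (if X ω ≤ s then 1 - X ω / s else 0) ^ 2)
        = P s - 2 * A s / s + B s / s ^ 2 := by
    intro s
    have h1 : (fun ω => (if X ω ≤ s then 1 - X ω / s else 0) ^ 2)
        = fun ω => ((if X ω ≤ s then (1:ℝ) else 0) - 2 * (if X ω ≤ s then X ω else 0) / s)
            + (if X ω ≤ s then X ω ^ 2 else 0) / s ^ 2 := by
      funext ω; split_ifs <;> [ring; simp]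
    have i1 : Integrable (fun ω => (if X ω ≤ s then (1:ℝ) else 0)
        - 2 * (if X ω ≤ s then X ω else 0) / s) := by
      exact (iP s).sub (((iA s).const_mul 2).div_const s)
    rw [h1, integral_add i1 ((iB s).div_const (s ^ 2)),
      integral_sub (iP s) (((iA s).const_mul 2).div_const s), integral_div, integral_div,
      integral_const_mul]
  have hCeq : ∀ s : ℝ, C s = s * (P s - A s) := by
    intro s
    have h1 : (fun ω => if X ω ≤ s then (0:ℝ) else s * (X ω - 1))
        = fun ω => (s * X ω - s * 1) - (s * (if X ω ≤ s then X ω else 0)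
            - s * (if X ω ≤ s then (1:ℝ) else 0)) := by
      funext ω; split_ifs <;> ring
    rw [hCdef]
    simp only [h1]
    have i1 : Integrable (fun ω => s * X ω - s * 1) := by
      exact (hX1.const_mul s).sub ((integrable_const 1).const_mul s)
    have i2 : Integrable (fun ω => s * (if X ω ≤ s then X ω else 0)
        - s * (if X ω ≤ s then (1:ℝ) else 0)) := by
      exact ((iA s).const_mul s).sub ((iP s).const_mul s)
    rw [integral_sub i1 i2,
      integral_sub (hX1.const_mul s) ((integrable_const 1).const_mul s),
      integral_sub ((iA s).const_mul s) ((iP s).const_mul s),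
      integral_const_mul, integral_const_mul, integral_const_mul, integral_const_mul, hmean]
    simp only [hPdef, hAdef]
    simp [measure_univ]
    ring
  have hDeq : ∀ s : ℝ, D s = s ^ 2 * (1 - P s) := by
    intro s
    have h1 : (fun ω => if X ω ≤ s then (0:ℝ) else s ^ 2)
        = fun ω => s ^ 2 * 1 - s ^ 2 * (if X ω ≤ s then (1:ℝ) else 0) := by
      funext ω; split_ifs <;> ring
    rw [hDdef]
    simp only [h1]
    rw [integral_sub ((integrable_const 1).const_mul (s ^ 2)) ((iP s).const_mul (s ^ 2)),
      integral_const_mul, integral_const_mul]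
    simp only [hPdef]
    simp [measure_univ]
    ring
  have hEeq : ∀ s : ℝ, E s = s * (1 - P s) := by
    intro s
    have h1 : (fun ω => if X ω ≤ s then (0:ℝ) else s)
        = fun ω => s * 1 - s * (if X ω ≤ s then (1:ℝ) else 0) := by
      funext ω; split_ifs <;> ring
    rw [hEdef]
    simp only [h1]
    rw [integral_sub ((integrable_const 1).const_mul s) ((iP s).const_mul s),
      integral_const_mul, integral_const_mul]
    simp only [hPdef]
    simp [measure_univ]
    ring
  -- limits via dominated convergence
  have hPlim : Tendsto P atTop (nhds 1) := by
    have h := dct_aux (Ω := Ω)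
      (F := fun s ω => if X ω ≤ s then (1:ℝ) else 0) (f := fun ω => (1:ℝ)) (bound := fun ω => (1:ℝ))
      (fun s => measif s _ measurable_const)
      (Eventually.of_forall fun s ω => by by_cases h : X ω ≤ s <;> simp [h])
      (integrable_const 1)
      (fun ω => by
        filter_upwards [eventually_ge_atTop (X ω)] with s hs
        simp [hs])
    have h1 : (∫ (_ : Ω), (1:ℝ)) = 1 := by simp
    rw [h1] at h
    rw [hPdef]
    exact h
  have hAlim : Tendsto A atTop (nhds 1) := by
    have h := dct_aux (Ω := Ω)
      (F := fun s ω => if X ω ≤ s then X ω else 0) (f := fun ω => X ω) (bound := fun ω => X ω)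
      (fun s => measif s _ hX)
      (Eventually.of_forall fun s ω => by
        have h0 := hXpos ω
        by_cases h : X ω ≤ s <;> simp [h, Real.norm_eq_abs, abs_of_nonneg h0, h0])
      hX1
      (fun ω => by
        filter_upwards [eventually_ge_atTop (X ω)] with s hs
        simp [hs])
    rw [hmean] at h
    rw [hAdef]
    exact h
  have hBlim : Tendsto B atTop (nhds m2) := by
    have h := dct_aux (Ω := Ω)
      (F := fun s ω => if X ω ≤ s then X ω ^ 2 else 0) (f := fun ω => X ω ^ 2) (bound := fun ω => X ω ^ 2)
      (fun s => measif s _ (hX.pow_const 2))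
      (Eventually.of_forall fun s ω => by
        by_cases h : X ω ≤ s <;>
          simp [h, Real.norm_eq_abs, abs_of_nonneg (sq_nonneg (X ω)), sq_nonneg (X ω)])
      hX2
      (fun ω => by
        filter_upwards [eventually_ge_atTop (X ω)] with s hs
        simp [hs])
    rw [hBdef, hm2def]
    exact h
  have hClim : Tendsto C atTop (nhds 0) := by
    have h := dct_aux (Ω := Ω)
      (F := fun s ω => if X ω ≤ s then (0:ℝ) else s * (X ω - 1)) (f := fun ω => (0:ℝ)) (bound := fun ω => X ω ^ 2)
      (fun s => (Measurable.ite (hmle s) measurable_const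
        (measurable_const.mul (hX.sub measurable_const))).aestronglyMeasurable)
      (by
        filter_upwards [eventually_ge_atTop (1:ℝ)] with s hs
        intro ω
        by_cases h : X ω ≤ s
        · simp [h, sq_nonneg]
        · have hx : s < X ω := not_le.mp h
          simp only [h, if_false]
          rw [Real.norm_eq_abs, abs_of_nonneg (by nlinarith)]
          nlinarith)
      hX2
      (fun ω => by
        filter_upwards [eventually_ge_atTop (X ω)] with s hs
        simp [hs])
    have h1 : (∫ (_ : Ω), (0:ℝ)) = 0 := by simp
    rw [h1] at h
    rw [hCdef]
    exact h
  have hDlim : Tendsto D atTop (nhds 0) := by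
    have h := dct_aux (Ω := Ω)
      (F := fun s ω => if X ω ≤ s then (0:ℝ) else s ^ 2) (f := fun ω => (0:ℝ)) (bound := fun ω => X ω ^ 2)
      (fun s => (Measurable.ite (hmle s) measurable_const measurable_const).aestronglyMeasurable)
      (by
        filter_upwards [eventually_ge_atTop (1:ℝ)] with s hs
        intro ω
        by_cases h : X ω ≤ s
        · simp [h, sq_nonneg]
        · have hx : s < X ω := not_le.mp h
          simp only [h, if_false]
          rw [Real.norm_eq_abs, abs_of_nonneg (by nlinarith)]
          nlinarith)
      hX2
      (fun ω => by
        filter_upwards [eventually_ge_atTop (X ω)] with s hs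
        simp [hs])
    have h1 : (∫ (_ : Ω), (0:ℝ)) = 0 := by simp
    rw [h1] at h
    rw [hDdef]
    exact h
  have hElim : Tendsto E atTop (nhds 0) := by
    have h := dct_aux (Ω := Ω)
      (F := fun s ω => if X ω ≤ s then (0:ℝ) else s) (f := fun ω => (0:ℝ)) (bound := fun ω => X ω ^ 2)
      (fun s => (Measurable.ite (hmle s) measurable_const measurable_const).aestronglyMeasurable)
      (by
        filter_upwards [eventually_ge_atTop (1:ℝ)] with s hs
        intro ω
        by_cases h : X ω ≤ s
        · simp [h, sq_nonneg]
        · have hx : s < X ω := not_le.mp h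
          simp only [h, if_false]
          rw [Real.norm_eq_abs, abs_of_nonneg (by nlinarith)]
          nlinarith)
      hX2
      (fun ω => by
        filter_upwards [eventually_ge_atTop (X ω)] with s hs
        simp [hs])
    have h1 : (∫ (_ : Ω), (0:ℝ)) = 0 := by simp
    rw [h1] at h
    rw [hEdef]
    exact h
  -- ψ tends to 1
  have hψlim : Tendsto ψ atTop (nhds 1) := by
    have hAdiv : Tendsto (fun s => A s / s) atTop (nhds 0) := hAlim.div_atTop tendsto_id
    have h : Tendsto (fun s => P s - A s / s) atTop (nhds (1 - 0)) := hPlim.sub hAdiv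
    rw [sub_zero] at h
    exact h.congr (fun s => (hψeq s).symm)
  have hψev : ∀ᶠ s in atTop, (1:ℝ)/2 < ψ s :=
    hψlim.eventually (eventually_gt_nhds (by norm_num))
  -- integral identities for Y
  have hYint : ∀ s : ℝ, (∫ ω, Y s ω) = (1 / ψ s) * ψ s := by
    intro s
    simp only [hY]
    rw [integral_const_mul]
    congr 1
    rw [hψ]
  have hXY : ∀ s : ℝ, (∫ ω, X ω * Y s ω) = (1 / ψ s) * (A s - B s / s) := by
    intro s
    have h1 : (fun ω => X ω * Y s ω)
        = fun ω => (1 / ψ s) * (X ω * (if X ω ≤ s then 1 - X ω / s else 0)) := by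
      funext ω; simp only [hY]; ring
    rw [h1, integral_const_mul, hXfeq s]
  have hY2 : ∀ s : ℝ,
      (∫ ω, (Y s ω) ^ 2) = (1 / ψ s) ^ 2 * (P s - 2 * A s / s + B s / s ^ 2) := by
    intro s
    have h1 : (fun ω => (Y s ω) ^ 2)
        = fun ω => (1 / ψ s) ^ 2 * ((if X ω ≤ s then 1 - X ω / s else 0) ^ 2) := by
      funext ω; simp only [hY]; ring
    rw [h1, integral_const_mul, hf2eq s]
  -- variance of Y, rescaled
  have hWev : ∀ᶠ s in atTop, s ^ 2 * ((∫ ω, (Y s ω) ^ 2) - (∫ ω, Y s ω) ^ 2)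
      = (D s * P s - 2 * (E s * A s) + B s - (A s) ^ 2) / (ψ s) ^ 2 := by
    filter_upwards [eventually_ge_atTop (1:ℝ), hψev] with s hs hψs
    have hs0 : s ≠ 0 := by intro h; rw [h] at hs; norm_num at hs
    have hψ0 : ψ s ≠ 0 := by intro h; rw [h] at hψs; norm_num at hψs
    rw [hY2 s, hYint s, hDeq s, hEeq s]
    have hA' : A s = s * P s - s * ψ s := by
      rw [hψeq s]
      field_simp
      ring
    rw [hA']
    field_simp
    ring
  have hWlim : Tendsto (fun s => s ^ 2 * ((∫ ω, (Y s ω) ^ 2) - (∫ ω, Y s ω) ^ 2))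
      atTop (nhds V) := by
    have h : Tendsto (fun s => (D s * P s - 2 * (E s * A s) + B s - (A s) ^ 2) / (ψ s) ^ 2)
        atTop (nhds ((0 * 1 - 2 * (0 * 1) + m2 - 1 ^ 2) / 1 ^ 2)) :=
      Tendsto.div ((((hDlim.mul hPlim).sub ((hElim.mul hAlim).const_mul 2)).add hBlim).sub
        (hAlim.pow 2)) (hψlim.pow 2) (by norm_num)
    have hval : (0 * 1 - 2 * (0 * 1) + m2 - 1 ^ 2) / 1 ^ 2 = V := by
      rw [hVdef]; ring
    rw [hval] at h
    exact Tendsto.congr' (hWev.mono fun s hs => hs.symm) h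
  have hWpos : ∀ᶠ s in atTop, 0 < (∫ ω, (Y s ω) ^ 2) - (∫ ω, Y s ω) ^ 2 := by
    filter_upwards [hWlim.eventually (eventually_gt_nhds hV), eventually_ge_atTop (1:ℝ)]
      with s h1 h2
    nlinarith [h1, h2, mul_nonneg (le_trans zero_le_one h2) (le_trans zero_le_one h2)]
  refine ⟨hWpos, ?_⟩
  -- rescaled covariance
  have hNev : ∀ᶠ s in atTop, s * ((∫ ω, X ω * Y s ω) - (∫ ω, X ω) * ∫ ω, Y s ω)
      = (-(C s) + A s - B s) / ψ s := by
    filter_upwards [eventually_ge_atTop (1:ℝ), hψev] with s hs hψs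
    have hs0 : s ≠ 0 := by intro h; rw [h] at hs; norm_num at hs
    have hψ0 : ψ s ≠ 0 := by intro h; rw [h] at hψs; norm_num at hψs
    rw [hXY s, hYint s, hmean, hCeq s]
    have hA' : A s = s * P s - s * ψ s := by
      rw [hψeq s]
      field_simp
      ring
    rw [hA']
    field_simp
    ring
  have hNlim : Tendsto (fun s => s * ((∫ ω, X ω * Y s ω) - (∫ ω, X ω) * ∫ ω, Y s ω))
      atTop (nhds (-V)) := by
    have h : Tendsto (fun s => (-(C s) + A s - B s) / ψ s)
        atTop (nhds ((-0 + 1 - m2) / 1)) :=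
      Tendsto.div ((hClim.neg.add hAlim).sub hBlim) hψlim one_ne_zero
    have hval : (-(0:ℝ) + 1 - m2) / 1 = -V := by rw [hVdef]; ring
    rw [hval] at h
    exact Tendsto.congr' (hNev.mono fun s hs => hs.symm) h
  -- denominator
  have hsqrtlim : Tendsto (fun s =>
      Real.sqrt (V * (s ^ 2 * ((∫ ω, (Y s ω) ^ 2) - (∫ ω, Y s ω) ^ 2))))
      atTop (nhds V) := by
    have h1 : Tendsto (fun s => V * (s ^ 2 * ((∫ ω, (Y s ω) ^ 2) - (∫ ω, Y s ω) ^ 2)))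
        atTop (nhds (V * V)) := hWlim.const_mul V
    have h2 := (Real.continuous_sqrt.tendsto (V * V)).comp h1
    rw [Real.sqrt_mul_self hV.le] at h2
    exact h2
  -- final equality
  have hfin : ∀ᶠ s in atTop,
      ((∫ ω, X ω * Y s ω) - (∫ ω, X ω) * ∫ ω, Y s ω) /
          Real.sqrt ((m2 - (∫ ω, X ω) ^ 2) *
            ((∫ ω, (Y s ω) ^ 2) - (∫ ω, Y s ω) ^ 2))
      = (s * ((∫ ω, X ω * Y s ω) - (∫ ω, X ω) * ∫ ω, Y s ω)) /
          Real.sqrt (V * (s ^ 2 * ((∫ ω, (Y s ω) ^ 2) - (∫ ω, Y s ω) ^ 2))) := by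
    filter_upwards [eventually_ge_atTop (1:ℝ)] with s hs
    have hs0 : (0:ℝ) < s := lt_of_lt_of_le one_pos hs
    have hVval : m2 - (∫ ω, X ω) ^ 2 = V := by rw [hmean, hVdef]; ring
    rw [hVval]
    rw [show V * (s ^ 2 * ((∫ ω, (Y s ω) ^ 2) - (∫ ω, Y s ω) ^ 2))
        = s ^ 2 * (V * ((∫ ω, (Y s ω) ^ 2) - (∫ ω, Y s ω) ^ 2)) by ring,
      Real.sqrt_mul (sq_nonneg s), Real.sqrt_sq hs0.le,
      mul_div_mul_left _ _ (ne_of_gt hs0)]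
  have hcomb : Tendsto (fun s =>
      (s * ((∫ ω, X ω * Y s ω) - (∫ ω, X ω) * ∫ ω, Y s ω)) /
        Real.sqrt (V * (s ^ 2 * ((∫ ω, (Y s ω) ^ 2) - (∫ ω, Y s ω) ^ 2))))
      atTop (nhds (-V / V)) := hNlim.div hsqrtlim (ne_of_gt hV)
  have hval : -V / V = -1 := by
    rw [neg_div, div_self (ne_of_gt hV)]
  rw [hval] at hcomb
  exact Tendsto.congr' (hfin.mono fun s hs => hs.symm) hcomb
end

section
/- Let d ≥ 1, let (q_{ij})_{i,j=1}^d be a real matrix whose rows sum to zero (Σ_j q_{ij} = 0 for every i), and let λ, μ ∈ ℝᵈ. For z > 0 define the d×d matrix A(z) with entries A(z)_{ij} = (λᵢ(z−1) + μᵢ(1/z − 1))·1_{{i=j}} + q_{ji}, and let α(z) = det A(z). Let T be the d×d matrix with first row identically equal to 1 and T_{ij} = q_{ji} for i ≥ 2, set τ = det T, assume τ ≠ 0, and let π ∈ ℝᵈ be the (unique) vector with T·π = e₁, the first standard unit vector. Then the function z ↦ α(z) has a derivative at z = 1 equal to τ·(Σ_j π_j λ_j − Σ_j π_j μ_j); in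 particular α(1) = 0. -/
/-!
The columns of `qᵀ` sum to zero, so adding all rows of `A(z)` to the first one replaces it by
`eⱼ(z) = λⱼ(z - 1) + μⱼ(1/z - 1) = (z - 1)(λⱼ - μⱼ/z)`. Hence `α(z) = (z - 1)β(z)` with `β`
continuous at `1`, which gives `α(1) = 0` and `α'(1) = β(1)`. Finally `β(1)` is `det T` with its
first row replaced by `λ - μ`, which Cramer's rule evaluates to `τ · (λ - μ) ⬝ π`.
-/

open Matrix

theorem Matrix.det_updateRow_eq_det_mul_dotProduct {n R : Type*} [Fintype n] [DecidableEq n]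
    [CommRing R] (T : Matrix n n R) (i : n) (v π : n → R) (hπ : T *ᵥ π = Pi.single i 1) :
    (T.updateRow i v).det = T.det * (v ⬝ᵥ π) := by
  have hcol : ∀ j, adjugate T j i = T.det * π j := fun j => by
    simpa [mulVec_single, adjugate_mul, smul_mulVec] using
      (congrFun (congrArg (adjugate T *ᵥ ·) hπ) j).symm
  rw [← cramer_transpose_apply, cramer_eq_adjugate_mulVec, ← adjugate_transpose]
  simp only [mulVec, dotProduct, transpose_apply, hcol, Finset.mul_sum]
  exact Finset.sum_congr rfl fun j _ => by ring

theorem Matrix.det_diagonal_add_transpose {n R : Type*} [Fintype n] [DecidableEq n] [CommRing R]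
    {q : Matrix n n R} (hq : ∀ i, ∑ j, q i j = 0) (w : n → R) (i : n) :
    (diagonal w + qᵀ).det = ((diagonal w + qᵀ).updateRow i w).det := by
  set M := diagonal w + qᵀ
  have hcol : ∑ k, (1 : R) • M k = w := by
    ext j
    rw [Finset.sum_apply]
    simp [M, Finset.sum_add_distrib, diagonal_apply, hq j]
  rw [← hcol, det_updateRow_sum, one_smul]

theorem hasDerivAt_sub_smul_of_continuousAt {𝕜 F : Type*} [NontriviallyNormedField 𝕜]
    [NormedAddCommGroup F] [NormedSpace 𝕜 F] {f : 𝕜 → F} {a : 𝕜} (hf : ContinuousAt f a) :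
    HasDerivAt (fun z => (z - a) • f z) (f a) a := by
  rw [hasDerivAt_iff_tendsto_slope]
  refine hf.tendsto.mono_left nhdsWithin_le_nhds |>.congr' ?_
  filter_upwards [self_mem_nhdsWithin] with z hz
  rw [slope_def_module, sub_self, zero_smul, sub_zero, smul_smul,
    inv_mul_cancel₀ (sub_ne_zero.2 hz), one_smul]

noncomputable def queueMatrix {n : Type*} [DecidableEq n] (q : Matrix n n ℝ) (lam mu : n → ℝ)
    (z : ℝ) : Matrix n n ℝ :=
  diagonal (fun i => lam i * (z - 1) + mu i * (1 / z - 1)) + qᵀ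

section

variable {n : Type*} [DecidableEq n] {q : Matrix n n ℝ} {lam mu : n → ℝ}

theorem queueMatrix_one : queueMatrix q lam mu 1 = qᵀ := by
  simp [queueMatrix]

variable [Fintype n]

theorem det_queueMatrix_eq_sub_one_mul (hq : ∀ i, ∑ j, q i j = 0) (i : n) {z : ℝ} (hz : z ≠ 0) :
    (queueMatrix q lam mu z).det =
      (z - 1) * ((queueMatrix q lam mu z).updateRow i (fun j => lam j - mu j / z)).det := by
  have hfactor : (fun j => lam j * (z - 1) + mu j * (1 / z - 1)) =
      (z - 1) • fun j => lam j - mu j / z := by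
    ext j
    simp only [Pi.smul_apply, smul_eq_mul]
    field_simp
    ring
  rw [queueMatrix, det_diagonal_add_transpose hq _ i, ← det_updateRow_smul, ← hfactor]

theorem continuousAt_det_queueMatrix_updateRow (i : n) :
    ContinuousAt
      (fun z => ((queueMatrix q lam mu z).updateRow i fun j => lam j - mu j / z).det) 1 := by
  have hentries : ContinuousAt
      (fun z => (queueMatrix q lam mu z).updateRow i fun j => lam j - mu j / z) 1 := by
    refine continuousAt_pi.2 fun a => continuousAt_pi.2 fun b => ?_
    simp only [updateRow_apply, queueMatrix, Matrix.add_apply, diagonal_apply]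
    split_ifs <;> fun_prop (disch := norm_num)
  exact continuous_id.matrix_det.continuousAt.comp hentries

theorem hasDerivAt_det_queueMatrix (hq : ∀ i, ∑ j, q i j = 0) (i : n) :
    HasDerivAt (fun z => (queueMatrix q lam mu z).det) (qᵀ.updateRow i (lam - mu)).det 1 := by
  have h := hasDerivAt_sub_smul_of_continuousAt
    (continuousAt_det_queueMatrix_updateRow (q := q) (lam := lam) (mu := mu) i)
  simp only [queueMatrix_one, div_one, smul_eq_mul] at h
  refine h.congr_of_eventuallyEq ?_
  filter_upwards [eventually_ne_nhds one_ne_zero] with z hz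
  exact det_queueMatrix_eq_sub_one_mul hq i hz

theorem det_queueMatrix_one [Nonempty n] (hq : ∀ i, ∑ j, q i j = 0) :
    (queueMatrix q lam mu 1).det = 0 := by
  simpa using det_queueMatrix_eq_sub_one_mul (lam := lam) (mu := mu) hq (Classical.arbitrary n)
    one_ne_zero

end

/-- Determinant expansion of the Markov-modulated M/M/1 queue: with transition-rate
matrix `q` (rows summing to zero), `A(z)ᵢⱼ = (λᵢ(z-1) + μᵢ(1/z-1))1_{i=j} + qⱼᵢ`,
`α(z) = det A(z)`, `T` the matrix with first row all ones and `Tᵢⱼ = qⱼᵢ` for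
`i ≥ 2`, `τ = det T ≠ 0`, and `π` the solution of `Tπ = e₁` (i.e. the stationary
distribution of the background chain), one has `α(1) = 0` and
`α′(1) = τ·(Σⱼ πⱼλⱼ - Σⱼ πⱼμⱼ)`. -/
theorem stmt19 (d : ℕ) (hd : 1 ≤ d)
    (q : Matrix (Fin d) (Fin d) ℝ) (hq : ∀ i, ∑ j, q i j = 0)
    (lam mu : Fin d → ℝ)
    (A : ℝ → Matrix (Fin d) (Fin d) ℝ)
    (hA : A = fun z => Matrix.of fun i j =>
      (if i = j then lam i * (z - 1) + mu i * (1 / z - 1) else 0) + q j i)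
    (α : ℝ → ℝ) (hα : α = fun z => (A z).det)
    (T : Matrix (Fin d) (Fin d) ℝ)
    (hT : T = Matrix.of fun i j => if i = (⟨0, by omega⟩ : Fin d) then 1 else q j i)
    (τ : ℝ) (hτ : τ = T.det)
    (π : Fin d → ℝ) (hπ : T.mulVec π = Pi.single (⟨0, by omega⟩ : Fin d) 1) :
    α 1 = 0 ∧ HasDerivAt α (τ * (∑ j, π j * lam j - ∑ j, π j * mu j)) 1 := by
  set i₀ : Fin d := ⟨0, by omega⟩
  have hA' : A = queueMatrix q lam mu := by
    subst hA
    ext z i j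
    by_cases hij : i = j <;> simp [queueMatrix, hij]
  have hT' : T = qᵀ.updateRow i₀ 1 := by
    subst hT
    ext i j
    by_cases hi : i = i₀ <;> simp [updateRow_apply, hi]
  have hderiv :
      (qᵀ.updateRow i₀ (lam - mu)).det = τ * (∑ j, π j * lam j - ∑ j, π j * mu j) := by
    rw [← updateRow_idem qᵀ i₀ 1, ← hT', det_updateRow_eq_det_mul_dotProduct T i₀ _ π hπ, hτ]
    simp only [dotProduct, Pi.sub_apply, sub_mul, Finset.sum_sub_distrib, mul_comm (lam _),
      mul_comm (mu _)]
  have : Nonempty (Fin d) := ⟨i₀⟩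
  subst hα
  rw [hA', ← hderiv]
  exact ⟨det_queueMatrix_one hq, hasDerivAt_det_queueMatrix hq i₀⟩
end
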